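/- arXiv:1004.0747 — 4 statements merged into one kernel-verified Lean document; each statement's English description precedes it below -/
import Mathlib

section
/- Suppose the triple (X, X(u), 𝒞) exhibits the cyclic sieving phenomenon, where 𝒞 = C_1 × ⋯ × C_m is a product of finite cyclic groups of odd total order |𝒞|, with injective characters ω_i : C_i → ℂ^×, and X(u) = Σ_{d ∈ ℤ^m} a_d u^d is a Laurent polynomial in u = (u_1,…,u_m) with nonnegative integer coefficients. Fix a nonnegative integer k, let (X choose k) denote the set of k-element subsets of X with the induced 𝒞-action, and define e_k[X(u)] as follows: with n = Σ_d a_d = |X|, choose a list (d^{(1)},…,d^{(n)}) of exponent vectors in which each d appears exactly a_d times, and set e_k[X(u)] = Σ_{1 ≤ i_1 < i_2 < ⋯ < i_k ≤ n} u^{d^{(i_1)} + d^{(i_2)} + ⋯ + d^{(i_k)}}. Then the triple ( (X choose k), e_k[X(u)], 𝒞 ) also exhibits the cyclic sieving phenomenon. -/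
/-!
Fix `c` and let `V` be the multiset of the values `ω(c)^{d⁽ʲ⁾}`; these are `|𝒞|`-th roots of
unity, and by the CSP the `p`-th power sum of `V` is the number of fixed points of `c ^ p`. Grouping
those fixed points by `⟨c⟩`-orbits, this number is `∑ |O|` over the orbits `O` with `|O| ∣ p`, which
is also the `p`-th power sum of `W = ⨄_O μ_{|O|}`. A multiset of `n`-th roots of unity is determined
by its power sums (discrete Fourier inversion), so `V = W`, and `e_k[X(ω(c))] = e_k(W)`. All orbit
sizes `ℓ` are odd, so `∏_{ζ ∈ μ_ℓ} (t + ζ) = t ^ ℓ + 1`; hence `e_k(W)` counts the sets of orbits of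
total size `k`, which are exactly the `c`-invariant `k`-subsets of `X`.
-/

open Finset Polynomial MulAction
open scoped Pointwise

theorem geom_sum_range_of_pow_eq_one {R : Type*} [CommRing R] [IsDomain R] [DecidableEq R]
    {x : R} {n : ℕ} (hx : x ^ n = 1) :
    ∑ i ∈ range n, x ^ i = if x = 1 then (n : R) else 0 := by
  split_ifs with h
  · simp [h]
  · have hmul : (∑ i ∈ range n, x ^ i) * (x - 1) = 0 := by rw [geom_sum_mul, hx, sub_self]
    exact (mul_eq_zero.mp hmul).resolve_right (sub_ne_zero.mpr h)

theorem Multiset.sum_range_sum_map_pow_mul_inv_pow {K : Type*} [Field K] [DecidableEq K]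
    {n : ℕ} (hn : n ≠ 0) {S : Multiset K} (hS : ∀ s ∈ S, s ^ n = 1) {z : K} (hz : z ^ n = 1) :
    ∑ p ∈ Finset.range n, (S.map (· ^ p)).sum * z⁻¹ ^ p = S.count z * n := by
  have hz0 : z ≠ 0 := by rintro rfl; simp [hn] at hz
  calc ∑ p ∈ Finset.range n, (S.map (· ^ p)).sum * z⁻¹ ^ p
      = (S.map fun s => ∑ p ∈ Finset.range n, (s * z⁻¹) ^ p).sum := by
        simp only [← sum_map_mul_right, mul_pow, Finset.sum_eq_multiset_sum]
        exact sum_map_sum_map _ _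
    _ = (S.map fun s => if s = z then (n : K) else 0).sum := by
        refine congrArg sum (map_congr rfl fun s hs => ?_)
        rw [geom_sum_range_of_pow_eq_one (by rw [mul_pow, hS s hs, inv_pow, hz, inv_one, one_mul])]
        exact if_congr (mul_inv_eq_one₀ hz0) rfl rfl
    _ = S.count z * n := by
        by_cases hzS : z ∈ S <;> simp [Finset.sum_multiset_map_count, hzS]

theorem Multiset.eq_of_sum_map_pow_eq {K : Type*} [Field K] [CharZero K] {n : ℕ} (hn : n ≠ 0)
    {S T : Multiset K} (hS : ∀ s ∈ S, s ^ n = 1) (hT : ∀ t ∈ T, t ^ n = 1)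
    (h : ∀ p, (S.map (· ^ p)).sum = (T.map (· ^ p)).sum) : S = T := by
  classical
  ext z
  by_cases hz : z ^ n = 1
  · have hcount := sum_range_sum_map_pow_mul_inv_pow hn hS hz
    simp only [h, sum_range_sum_map_pow_mul_inv_pow hn hT hz] at hcount
    exact_mod_cast (mul_right_cancel₀ (Nat.cast_ne_zero.mpr hn) hcount).symm
  · rw [count_eq_zero_of_notMem fun hmem => hz (hS z hmem),
      count_eq_zero_of_notMem fun hmem => hz (hT z hmem)]

theorem sum_map_pow_nthRoots_one {R : Type*} [CommRing R] [IsDomain R] [DecidableEq R]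
    {ℓ : ℕ} {ζ : R} (hζ : IsPrimitiveRoot ζ ℓ) (p : ℕ) :
    ((nthRoots ℓ (1 : R)).map (· ^ p)).sum = if ℓ ∣ p then (ℓ : R) else 0 := by
  have hpow (i : ℕ) : (ζ ^ i * 1) ^ p = (ζ ^ p) ^ i := by ring
  rw [hζ.nthRoots_eq (one_pow ℓ), Multiset.map_map]
  simp only [Function.comp_def, hpow]
  rw [← range_val, ← sum_eq_multiset_sum,
    geom_sum_range_of_pow_eq_one (by rw [← pow_mul, mul_comm, pow_mul, hζ.pow_eq_one, one_pow])]
  exact if_congr (hζ.pow_eq_one_iff_dvd p) rfl rfl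

theorem sum_map_pow_sum_nthRoots_one {ι R : Type*} [Fintype ι] [CommRing R] [IsDomain R]
    [DecidableEq R] {ℓ : ι → ℕ} (hζ : ∀ i, ∃ ζ : R, IsPrimitiveRoot ζ (ℓ i)) (p : ℕ) :
    ((∑ i, nthRoots (ℓ i) (1 : R)).map (· ^ p)).sum =
      ∑ i, if ℓ i ∣ p then (ℓ i : R) else 0 := by
  rw [← Multiset.coe_mapAddMonoidHom, map_sum, Multiset.sum_sum]
  refine sum_congr rfl fun i _ => ?_
  obtain ⟨ζ, hζ⟩ := hζ i
  exact sum_map_pow_nthRoots_one hζ p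

theorem prod_X_add_C_nthRoots_one_of_odd {R : Type*} [CommRing R] [IsDomain R] {ℓ : ℕ} {ζ : R}
    (hζ : IsPrimitiveRoot ζ ℓ) (hℓ : Odd ℓ) :
    ((nthRoots ℓ (1 : R)).map (fun r => X + C r)).prod = X ^ ℓ + 1 := by
  rw [hζ.nthRoots_eq (one_pow ℓ), Multiset.map_map, ← range_val, ← prod_eq_multiset_prod,
    ← sub_neg_eq_add, ← C_1, ← C_neg, X_pow_sub_C_eq_prod hζ hℓ.pos hℓ.neg_one_pow]
  simp [sub_eq_add_neg]

theorem coeff_prod_X_pow_add_one {ι R : Type*} [Fintype ι] [DecidableEq ι] [CommSemiring R]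
    (ℓ : ι → ℕ) (k : ℕ) :
    (∏ i, (X ^ ℓ i + 1 : R[X])).coeff k = #{T : Finset ι | ∑ i ∈ T, ℓ i = k} := by
  simp only [prod_add, prod_const_one, mul_one, prod_pow_eq_pow_sum, finsetSum_coeff,
    coeff_X_pow, sum_boole, powerset_univ]
  simp [eq_comm]

theorem esymm_sum_nthRoots_one_of_odd {ι R : Type*} [Fintype ι] [CommRing R] [IsDomain R]
    {ℓ : ι → ℕ} (hℓ : ∀ i, Odd (ℓ i)) (hζ : ∀ i, ∃ ζ : R, IsPrimitiveRoot ζ (ℓ i)) (k : ℕ) :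
    (∑ i, nthRoots (ℓ i) (1 : R)).esymm k = #{T : Finset ι | ∑ i ∈ T, ℓ i = k} := by
  classical
  choose ζ hζ using hζ
  set W := ∑ i, nthRoots (ℓ i) (1 : R)
  have hcard : Multiset.card W = ∑ i, ℓ i := by
    simp only [W, Multiset.card_sum, fun i => (hζ i).card_nthRoots_one]
  rcases le_or_gt k (∑ i, ℓ i) with hk | hk
  · have hprod : (W.map (fun r => X + C r)).prod = ∏ i, (X ^ ℓ i + 1) := by
      rw [← Multiset.coe_mapAddMonoidHom, map_sum, Multiset.prod_sum]
      exact prod_congr rfl fun i _ => prod_X_add_C_nthRoots_one_of_odd (hζ i) (hℓ i)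
    have hcoeff := Multiset.prod_X_add_C_coeff W (k := ∑ i, ℓ i - k) (by omega)
    rw [hprod, hcard, Nat.sub_sub_self hk, coeff_prod_X_pow_add_one] at hcoeff
    rw [← hcoeff]
    have hcompl (T : Finset ι) : ∑ i ∈ Tᶜ, ℓ i + ∑ i ∈ T, ℓ i = ∑ i, ℓ i :=
      sum_compl_add_sum T ℓ
    congr 1
    refine card_nbij' compl compl (fun T hT => ?_) (fun T hT => ?_) (fun T _ => compl_compl T)
      (fun T _ => compl_compl T) <;> grind
  · have hW : W.powersetCard k = 0 := Multiset.powersetCard_eq_empty k (by omega)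
    have hT (T : Finset ι) : ∑ i ∈ T, ℓ i ≤ ∑ i, ℓ i := sum_le_sum_of_subset (subset_univ T)
    simp [Multiset.esymm, hW, filter_false_of_mem fun T _ => (hT T).trans_lt hk |>.ne]

namespace MulAction

variable {G X : Type*} [Group G] [MulAction G X] (g : G)

local notation "Ω" => orbitRel.Quotient (Subgroup.zpowers g) X

theorem mem_of_smul_finset_eq [DecidableEq X] {s : Finset X} (hs : g • s = s) {x y : X}
    (hx : x ∈ s) (hxy : (Quotient.mk'' y : Ω) = Quotient.mk'' x) : y ∈ s := by
  obtain ⟨⟨h, hh⟩, rfl⟩ := Quotient.exact' hxy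
  have hstab : h ∈ stabilizer G s := Subgroup.zpowers_le.mpr (mem_stabilizer_iff.mpr hs) hh
  rw [← mem_stabilizer_iff.mp hstab]
  exact smul_mem_smul_finset hx

theorem card_orbit_mk_zpowers [Finite X] (x : X) :
    Nat.card (orbitRel.Quotient.orbit (Quotient.mk'' x : Ω)) = period g x := by
  have := Fintype.ofFinite X
  classical
  rw [orbitRel.Quotient.orbit_mk, period_eq_minimalPeriod, minimalPeriod_eq_card,
    Nat.card_eq_fintype_card]

theorem card_orbit_zpowers_dvd_natCard [Finite G] [Finite X] (o : Ω) :
    Nat.card o.orbit ∣ Nat.card G := by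
  induction o using Quotient.inductionOn' with
  | h x => rw [card_orbit_mk_zpowers]; exact (period_dvd_orderOf g x).trans (orderOf_dvd_natCard g)

theorem mk_smul_self (x : X) : (Quotient.mk'' (g • x) : Ω) = Quotient.mk'' x :=
  Quotient.sound' ⟨⟨g, Subgroup.mem_zpowers g⟩, rfl⟩

variable [Fintype X]

theorem card_filter_mk_eq_card_orbit [DecidableEq Ω] (o : Ω) :
    #{x : X | (Quotient.mk'' x : Ω) = o} = Nat.card o.orbit := by
  rw [← Fintype.card_subtype, ← Nat.card_eq_fintype_card]
  exact Nat.card_congr (Equiv.subtypeEquivRight fun x => orbitRel.Quotient.mem_orbit.symm)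

theorem card_filter_mk_mem [DecidableEq Ω] (T : Finset Ω) :
    #(univ.filter fun x : X => (Quotient.mk'' x : Ω) ∈ T) = ∑ o ∈ T, Nat.card o.orbit := by
  simp only [← card_filter_mk_eq_card_orbit, sum_card_fiberwise_eq_card_filter]

theorem image_mk_filter_mk_mem [DecidableEq Ω] (T : Finset Ω) :
    (univ.filter fun x : X => (Quotient.mk'' x : Ω) ∈ T).image Quotient.mk'' = T := by
  ext o
  induction o using Quotient.inductionOn' with
  | h y =>
    simp only [mem_image, mem_filter, mem_univ, true_and]
    exact ⟨fun ⟨x, hx, hxy⟩ => hxy ▸ hx, fun hy => ⟨y, hy, rfl⟩⟩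

theorem card_fixed_pow_eq [Fintype Ω] (p : ℕ) :
    Nat.card {x : X | g ^ p • x = x} =
      ∑ o : Ω, if Nat.card o.orbit ∣ p then Nat.card o.orbit else 0 := by
  classical
  let q : X → Ω := Quotient.mk''
  calc Nat.card {x : X | g ^ p • x = x}
      = ∑ x, if Nat.card (q x).orbit ∣ p then 1 else 0 := by
        simp only [q, card_orbit_mk_zpowers, ← pow_smul_eq_iff_period_dvd, sum_boole]
        rw [← Fintype.card_subtype, ← Nat.card_eq_fintype_card]
        rfl
    _ = ∑ o, ∑ x with q x = o, if Nat.card (q x).orbit ∣ p then 1 else 0 :=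
        (sum_fiberwise _ q _).symm
    _ = _ := by
        refine sum_congr rfl fun o _ => ?_
        rw [sum_congr rfl fun x hx => by rw [(mem_filter.mp hx).2], sum_const,
          card_filter_mk_eq_card_orbit]
        split_ifs <;> simp

variable [DecidableEq X]

theorem filter_mk_mem_image_mk [DecidableEq Ω] {s : Finset X} (hs : g • s = s) :
    univ.filter (fun x : X => (Quotient.mk'' x : Ω) ∈ s.image Quotient.mk'') = s := by
  ext y
  simp only [mem_filter, mem_univ, true_and, mem_image]
  exact ⟨fun ⟨x, hx, hxy⟩ => mem_of_smul_finset_eq g hs hx hxy.symm, fun hy => ⟨y, hy, rfl⟩⟩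

theorem smul_filter_mk_mem [DecidableEq Ω] (T : Finset Ω) :
    g • univ.filter (fun x : X => (Quotient.mk'' x : Ω) ∈ T) =
      univ.filter (fun x : X => (Quotient.mk'' x : Ω) ∈ T) := by
  ext y
  simp only [mem_smul_finset, mem_filter, mem_univ, true_and]
  refine ⟨fun ⟨x, hx, hxy⟩ => hxy ▸ (mk_smul_self g x).symm ▸ hx,
    fun hy => ⟨g⁻¹ • y, ?_, smul_inv_smul g y⟩⟩
  rwa [← mk_smul_self g, smul_inv_smul]

theorem card_fixed_finsets_eq [Fintype Ω] (k : ℕ) :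
    Nat.card {s : Finset X | s.card = k ∧ g • s = s} =
      #{T : Finset Ω | ∑ o ∈ T, Nat.card o.orbit = k} := by
  classical
  let e : {s : Finset X // s.card = k ∧ g • s = s} ≃
      {T : Finset Ω // ∑ o ∈ T, Nat.card o.orbit = k} :=
    { toFun s := ⟨s.1.image Quotient.mk'', by
        rw [← card_filter_mk_mem, filter_mk_mem_image_mk g s.2.2, s.2.1]⟩
      invFun T := ⟨univ.filter fun x => Quotient.mk'' x ∈ T.1,
        by rw [card_filter_mk_mem, T.2], smul_filter_mk_mem g T.1⟩
      left_inv s := Subtype.ext (filter_mk_mem_image_mk g s.2.2)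
      right_inv T := Subtype.ext (image_mk_filter_mk_mem g T.1) }
  rw [← Fintype.card_subtype, ← Nat.card_eq_fintype_card]
  exact Nat.card_congr e

end MulAction

section Monomial

variable {ι : Type*} [Fintype ι] {C : ι → Type*} [∀ i, Group (C i)] {M : Type*} [CommGroup M]

def evalMonomial (ω : ∀ i, C i →* M) (d : ι → ℤ) : (∀ i, C i) →* M :=
  ∏ i, (zpowGroupHom (d i)).comp ((ω i).comp (Pi.evalMonoidHom C i))

@[simp]
theorem evalMonomial_apply (ω : ∀ i, C i →* M) (d : ι → ℤ) (c : ∀ i, C i) :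
    evalMonomial ω d c = ∏ i, ω i (c i) ^ d i := by
  simp [evalMonomial]

theorem Units.coe_evalMonomial {K : Type*} [Field K] (ω : ∀ i, C i →* Kˣ) (d : ι → ℤ)
    (c : ∀ i, C i) : (evalMonomial ω d c : K) = ∏ i, (ω i (c i) : K) ^ d i := by
  simp [Units.coe_prod]

theorem evalMonomial_zero (ω : ∀ i, C i →* M) : evalMonomial ω 0 = 1 := by
  ext; simp

theorem evalMonomial_add (ω : ∀ i, C i →* M) (d d' : ι → ℤ) :
    evalMonomial ω (d + d') = evalMonomial ω d * evalMonomial ω d' := by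
  ext; simp [zpow_add, prod_mul_distrib]

theorem evalMonomial_sum {κ : Type*} (ω : ∀ i, C i →* M) (s : Finset κ) (D : κ → ι → ℤ) :
    evalMonomial ω (∑ j ∈ s, D j) = ∏ j ∈ s, evalMonomial ω (D j) := by
  induction s using Finset.cons_induction with
  | empty => exact evalMonomial_zero ω
  | cons j s hj ih => rw [sum_cons, prod_cons, evalMonomial_add, ih]

end Monomial

theorem Finset.sum_comp_eq_sum_support_nsmul {ι β M : Type*} [Fintype ι] [DecidableEq β]
    [AddCommMonoid M] {D : ι → β} {a : β →₀ ℕ} (hD : ∀ d, #{j | D j = d} = a d) (f : β → M) :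
    ∑ j, f (D j) = ∑ d ∈ a.support, a d • f d := by
  have hmaps (j : ι) (_ : j ∈ univ) : D j ∈ a.support := by
    rw [Finsupp.mem_support_iff, ← hD]
    exact card_ne_zero_of_mem (mem_filter.mpr ⟨mem_univ j, rfl⟩)
  rw [← sum_fiberwise_of_maps_to hmaps]
  refine sum_congr rfl fun d _ => ?_
  rw [sum_congr rfl fun j hj => by rw [(mem_filter.mp hj).2], sum_const, hD]

section CyclicSieving

variable {ι κ : Type*} [Fintype ι] [Fintype κ] {C : ι → Type*}
  [∀ i, Group (C i)] (ω : ∀ i, C i →* ℂˣ) (D : κ → ι → ℤ)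

theorem sum_pow_evalMonomial_eq_card_fixed {X : Type*} [MulAction (∀ i, C i) X]
    {a : (ι → ℤ) →₀ ℕ} (hD : ∀ d, #{j | D j = d} = a d)
    (hCSP : ∀ c : ∀ i, C i, (Nat.card {x : X | c • x = x} : ℂ) =
      ∑ d ∈ a.support, (a d : ℂ) * ∏ i, (ω i (c i) : ℂ) ^ d i)
    (c : ∀ i, C i) (p : ℕ) :
    ∑ j, (evalMonomial ω (D j) c : ℂ) ^ p = Nat.card {x : X | c ^ p • x = x} := by
  simp only [← Units.val_pow_eq_pow_val, ← map_pow]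
  rw [sum_comp_eq_sum_support_nsmul hD fun d => (evalMonomial ω d (c ^ p) : ℂ), hCSP]
  simp only [Units.coe_evalMonomial, nsmul_eq_mul]

theorem map_evalMonomial_eq_sum_nthRoots [∀ i, Finite (C i)] {X : Type*} [Fintype X]
    [MulAction (∀ i, C i) X] {a : (ι → ℤ) →₀ ℕ} (hD : ∀ d, #{j | D j = d} = a d)
    (hCSP : ∀ c : ∀ i, C i, (Nat.card {x : X | c • x = x} : ℂ) =
      ∑ d ∈ a.support, (a d : ℂ) * ∏ i, (ω i (c i) : ℂ) ^ d i)
    (c : ∀ i, C i) [Fintype (orbitRel.Quotient (Subgroup.zpowers c) X)] :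
    univ.val.map (fun j => (evalMonomial ω (D j) c : ℂ)) =
      ∑ o : orbitRel.Quotient (Subgroup.zpowers c) X, nthRoots (Nat.card o.orbit) (1 : ℂ) := by
  have hpos (o : orbitRel.Quotient (Subgroup.zpowers c) X) : 0 < Nat.card o.orbit :=
    have := o.nonempty_orbit.to_subtype
    Nat.card_pos
  refine Multiset.eq_of_sum_map_pow_eq (Nat.card_pos (α := ∀ i, C i)).ne' ?_ ?_ fun p => ?_
  · simp only [Multiset.mem_map, mem_val, mem_univ, true_and]
    rintro _ ⟨j, rfl⟩
    rw [← Units.val_pow_eq_pow_val, ← map_pow, pow_card_eq_one', map_one, Units.val_one]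
  · intro z hz
    obtain ⟨o, -, hzo⟩ := Multiset.mem_sum.mp hz
    obtain ⟨t, ht⟩ := card_orbit_zpowers_dvd_natCard c o
    rw [ht, pow_mul, (mem_nthRoots (hpos o)).mp hzo, one_pow]
  · rw [sum_map_pow_sum_nthRoots_one fun o => ⟨_, Complex.isPrimitiveRoot_exp _ (hpos o).ne'⟩,
      Multiset.map_map, ← sum_eq_multiset_sum]
    simp only [Function.comp_apply, sum_pow_evalMonomial_eq_card_fixed ω D hD hCSP,
      card_fixed_pow_eq]
    push_cast
    rfl

theorem sum_powersetCard_prod_zpow_eq_esymm (c : ∀ i, C i) (k : ℕ) :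
    ∑ s ∈ powersetCard k univ, ∏ i, (ω i (c i) : ℂ) ^ (∑ j ∈ s, D j i) =
      (univ.val.map fun j => (evalMonomial ω (D j) c : ℂ)).esymm k := by
  rw [esymm_map_val]
  refine sum_congr rfl fun s _ => ?_
  rw [← Units.coe_evalMonomial, ← sum_fn, evalMonomial_sum, MonoidHom.finsetProd_apply,
    Units.coe_prod]

end CyclicSieving

theorem subsets_CSP_general (m : ℕ) (C : Fin m → Type)
    [∀ i, Group (C i)] [∀ i, Fintype (C i)]
    (hodd : Odd (Nat.card (∀ i, C i)))
    (X : Type) [Fintype X] [DecidableEq X] [MulAction (∀ i, C i) X]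
    (ω : ∀ i, C i →* ℂˣ)
    (a : (Fin m → ℤ) →₀ ℕ) (N : ℕ)
    (D : Fin N → (Fin m → ℤ))
    (hD : ∀ d, (Finset.univ.filter (fun j => D j = d)).card = a d)
    (hCSP : ∀ c : ∀ i, C i,
      (Nat.card {x : X | c • x = x} : ℂ) =
      ∑ d ∈ a.support, (a d : ℂ) * ∏ i, ((ω i (c i) : ℂ) ^ (d i)))
    (k : ℕ) :
    ∀ c : ∀ i, C i,
      (Nat.card {s : Finset X | s.card = k ∧
          s.image (fun x => c • x) = s} : ℂ) =
      ∑ s ∈ Finset.powersetCard k (Finset.univ : Finset (Fin N)), ∏ i,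
        ((ω i (c i) : ℂ) ^ (∑ j ∈ s, D j i)) := by
  intro c
  let _ : Fintype (orbitRel.Quotient (Subgroup.zpowers c) X) := Fintype.ofFinite _
  have hodd_orbit (o : orbitRel.Quotient (Subgroup.zpowers c) X) : Odd (Nat.card o.orbit) :=
    hodd.of_dvd_nat (card_orbit_zpowers_dvd_natCard c o)
  calc (Nat.card {s : Finset X | s.card = k ∧ s.image (fun x => c • x) = s} : ℂ)
      = #{T : Finset (orbitRel.Quotient (Subgroup.zpowers c) X) |
          ∑ o ∈ T, Nat.card o.orbit = k} := by exact_mod_cast card_fixed_finsets_eq c k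
    _ = (∑ o : orbitRel.Quotient (Subgroup.zpowers c) X,
          nthRoots (Nat.card o.orbit) (1 : ℂ)).esymm k :=
      (esymm_sum_nthRoots_one_of_odd hodd_orbit
        (fun o => ⟨_, Complex.isPrimitiveRoot_exp _ (hodd_orbit o).pos.ne'⟩) k).symm
    _ = _ := by
      rw [← map_evalMonomial_eq_sum_nthRoots ω D hD hCSP c, sum_powersetCard_prod_zpow_eq_esymm]

/-- **Proposition (exterior power construction).**
Suppose the triple `(X, X(u), 𝒞)` exhibits the CSP, where `𝒞 = C₁ × ⋯ × C_m`
is a product of finite cyclic groups of **odd** total order, with injective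
characters `ωᵢ`, and `X(u) = Σ_d a_d u^d` is a Laurent polynomial with
nonnegative integer coefficients.  Choose a list `D : Fin N → ℤ^m` of exponent
vectors in which each `d` occurs exactly `a_d` times (so `N = Σ_d a_d = |X|`);
then `e_k[X(u)] = Σ_{1 ≤ i₁ < ⋯ < i_k ≤ N} u^{D(i₁)+⋯+D(i_k)}`, a sum indexed
by the `k`-element subsets of `Fin N`.  Then the triple consisting of the set
of `k`-element subsets of `X` (with the induced action), `e_k[X(u)]`, and `𝒞`,
also exhibits the CSP. -/
theorem subsets_CSP (m : ℕ) (C : Fin m → Type)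
    [∀ i, Group (C i)] [∀ i, Fintype (C i)] (hcyc : ∀ i, IsCyclic (C i))
    (hodd : Odd (Nat.card (∀ i, C i)))
    (X : Type) [Fintype X] [DecidableEq X] [MulAction (∀ i, C i) X]
    (ω : ∀ i, C i →* ℂˣ) (hω : ∀ i, Function.Injective (ω i))
    (a : (Fin m → ℤ) →₀ ℕ) (N : ℕ) (hN : Nat.card X = N)
    (D : Fin N → (Fin m → ℤ))
    (hD : ∀ d, (Finset.univ.filter (fun j => D j = d)).card = a d)
    (hCSP : ∀ c : ∀ i, C i,
      (Nat.card {x : X | c • x = x} : ℂ) =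
      ∑ d ∈ a.support, (a d : ℂ) * ∏ i, ((ω i (c i) : ℂ) ^ (d i)))
    (k : ℕ) :
    ∀ c : ∀ i, C i,
      (Nat.card {s : Finset X | s.card = k ∧
          s.image (fun x => c • x) = s} : ℂ) =
      ∑ s ∈ Finset.powersetCard k (Finset.univ : Finset (Fin N)), ∏ i,
        ((ω i (c i) : ℂ) ^ (∑ j ∈ s, D j i)) :=
  subsets_CSP_general m C hodd X ω a N D hD hCSP k
end

section
/- Suppose the triple (X, X(u), 𝒞) exhibits the cyclic sieving phenomenon, where 𝒞 = C_1 × ⋯ × C_m is a product of finite cyclic groups with injective characters ω_i : C_i → ℂ^× and X(u) is a Laurent polynomial in u = (u_1,…,u_m) with nonnegative integer coefficients. Fix nonnegative integers m', k. Then the triple consisting of the set of k-element multisubsets of the set of m'-element multisubsets of X (with its induced 𝒞-action), the Laurent polynomial h_k[ h_{m'}[ X(u) ] ], and the group 𝒞, also exhibits the cyclic sieving phenomenon. -/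
/-!
Evaluating the CSP polynomial at `ω(c)^r = ω(c^r)` shows that the CSP for `X` says exactly
that `c^r` has `p_r(w) = ∑ⱼ wⱼ^r` fixed points for every `r ≥ 1`, where `wⱼ = ∏ᵢ ω(cᵢ)^(Dⱼ i)`.
This property passes from an injective self-map `f` of a finite set to the induced map on
`k`-multisets, with weights the monomials of `h_k(w)`: the fixed-point counts of `Sym^k f` and
the values `h_k(w)` satisfy the same Newton recurrence `k aₖ = ∑_{r=1}^k p_r(w) a_{k-r}`.
On the combinatorial side this is because a fixed multiset containing `y` at least `q` times
contains `q` copies of the whole `f`-orbit of `y`, which can be removed. Applying it for `m'`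
and then for `k` gives the theorem.
-/

open Finset Function

namespace Sym

lemma map_eq_self_iff {α : Type*} {n : ℕ} {f : α → α} {S : Sym α n} :
    Sym.map f S = S ↔ (S : Multiset α).map f = S := by
  rw [← Sym.coe_inj, Sym.coe_map]

lemma iterate_map {α : Type*} {n : ℕ} (f : α → α) (r : ℕ) :
    (Sym.map f : Sym α n → Sym α n)^[r] = Sym.map f^[r] := by
  induction r with
  | zero => funext s; exact (Sym.map_id s).symm
  | succ r ih => funext s; rw [iterate_succ_apply', ih, Sym.map_map, ← iterate_succ']

variable {α M : Type*} [Fintype α] [DecidableEq α] [AddCommMonoid M]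

lemma nsmul_sum_eq_sum_sum_filter_le_count {k : ℕ} (w : Sym α k → M) :
    k • ∑ S, w S =
      ∑ a, ∑ q ∈ Icc 1 k, ∑ S : Sym α k with q ≤ S.toMultiset.count a, w S := by
  have count_eq (S : Sym α k) (a : α) :
      (S : Multiset α).count a = #{q ∈ Icc 1 k | q ≤ (S : Multiset α).count a} := by
    have hle : (S : Multiset α).count a ≤ k := by
      simpa using Multiset.count_le_card a (S : Multiset α)
    rw [show {q ∈ Icc 1 k | q ≤ (S : Multiset α).count a} = Icc 1 ((S : Multiset α).count a) by
      ext q; simp only [mem_filter, mem_Icc]; omega, Nat.card_Icc, Nat.add_sub_cancel]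
  calc k • ∑ S, w S = ∑ S : Sym α k, ∑ a, (S : Multiset α).count a • w S := by
        simp_rw [smul_sum, ← sum_smul, Multiset.sum_count_eq_card (fun a _ => mem_univ a),
          Sym.card_coe]
    _ = ∑ S : Sym α k, ∑ a, ∑ q ∈ Icc 1 k, if q ≤ (S : Multiset α).count a then w S else 0 := by
        simp_rw [← sum_filter, sum_const, ← count_eq]
    _ = _ := by
        rw [sum_comm]
        simp_rw [sum_filter]
        exact sum_congr rfl fun a _ => sum_comm

lemma sum_filter_le_eq_sum_add (A : Multiset α) {k : ℕ} (hA : Multiset.card A ≤ k)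
    (g : Multiset α → M) :
    ∑ S : Sym α k with A ≤ S.toMultiset, g S =
      ∑ T : Sym α (k - Multiset.card A), g (T + A) := by
  symm
  refine sum_bij (fun T _ => ⟨T + A, by simp; omega⟩)
    (fun T _ => mem_filter.mpr ⟨mem_univ _, Multiset.le_add_left _ _⟩)
    (fun T _ T' _ h => ?_) (fun S hS => ?_) (fun T _ => rfl)
  · exact Sym.coe_injective (add_right_cancel (congrArg Subtype.val h))
  · have hle : A ≤ S := (mem_filter.mp hS).2
    refine ⟨⟨S - A, by rw [Multiset.card_sub hle, S.card_coe]⟩, mem_univ _, ?_⟩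
    exact Sym.coe_injective (tsub_add_cancel_of_le hle)

end Sym

section CompleteHomogeneous

variable {ι R : Type*} [Fintype ι] [DecidableEq ι] [CommSemiring R]

theorem nsmul_sum_sym_prod_map_eq (w : ι → R) (k : ℕ) :
    k • ∑ s : Sym ι k, ((s : Multiset ι).map w).prod =
      ∑ r ∈ Icc 1 k, (∑ i, w i ^ r) * ∑ s : Sym ι (k - r), ((s : Multiset ι).map w).prod := by
  rw [Sym.nsmul_sum_eq_sum_sum_filter_le_count, sum_comm]
  refine sum_congr rfl fun r hr => ?_
  have hrk (i : ι) : Multiset.card (Multiset.replicate r i) ≤ k := by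
    rw [Multiset.card_replicate]; exact (mem_Icc.mp hr).2
  simp_rw [sum_mul, Multiset.le_count_iff_replicate_le]
  refine sum_congr rfl fun i _ => ?_
  rw [Sym.sum_filter_le_eq_sum_add _ (hrk i) (fun s => (s.map w).prod), Multiset.card_replicate,
    mul_sum]
  simp_rw [Multiset.map_add, Multiset.prod_add, Multiset.map_replicate, Multiset.prod_replicate,
    mul_comm]

end CompleteHomogeneous

theorem eq_of_nsmul_eq_sum_Icc {R : Type*} [Semiring R] [IsAddTorsionFree R] {p a b : ℕ → R}
    (h0 : a 0 = b 0) (ha : ∀ k, k • a k = ∑ r ∈ Icc 1 k, p r * a (k - r))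
    (hb : ∀ k, k • b k = ∑ r ∈ Icc 1 k, p r * b (k - r)) : a = b := by
  funext k
  induction k using Nat.strong_induction_on with
  | _ k ih =>
    rcases k with _ | k
    · exact h0
    refine nsmul_right_injective k.succ_ne_zero ?_
    simp only [ha, hb]
    exact sum_congr rfl fun r hr => by rw [ih _ (by grind)]

lemma sum_Icc_ite_mul_le_eq_sum_Icc_ite_dvd {M : Type*} [AddCommMonoid M] {ℓ : ℕ} (hℓ : 0 < ℓ)
    (k : ℕ) (g : ℕ → M) :
    ∑ q ∈ Icc 1 k, (if q * ℓ ≤ k then g (q * ℓ) else 0) =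
      ∑ r ∈ Icc 1 k, if ℓ ∣ r then g r else 0 := by
  rw [← sum_filter, ← sum_filter]
  refine sum_nbij' (· * ℓ) (· / ℓ) ?_ ?_ (fun q _ => Nat.mul_div_cancel q hℓ) ?_ (fun _ _ => rfl)
  · simp only [mem_filter, mem_Icc]
    intro q ⟨⟨hq, _⟩, hqk⟩
    exact ⟨⟨Nat.one_le_iff_ne_zero.mpr (by positivity), hqk⟩, dvd_mul_left ℓ q⟩
  · simp only [mem_filter, mem_Icc]
    rintro _ ⟨⟨hr, hrk⟩, q, rfl⟩
    rw [Nat.mul_div_cancel_left q hℓ, mul_comm]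
    exact ⟨⟨Nat.pos_of_mul_pos_left hr, (Nat.le_mul_of_pos_left q hℓ).trans hrk⟩, hrk⟩
  · simp only [mem_filter, mem_Icc]
    exact fun r ⟨_, hr⟩ => Nat.div_mul_cancel hr

namespace Function

variable {Y : Type*} {f : Y → Y} {y : Y}

lemma map_toMultiset_periodicOrbit (hy : y ∈ periodicPts f) :
    (periodicOrbit f y).toMultiset.map f = (periodicOrbit f y).toMultiset := by
  conv_rhs => rw [← periodicOrbit_apply_eq hy]
  simp only [periodicOrbit, Cycle.coe_toMultiset, Multiset.map_coe, List.map_map,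
    minimalPeriod_apply hy]
  congr 2
  funext n
  exact (iterate_succ_apply' f n y).symm.trans (iterate_succ_apply f n y)

lemma nodup_toMultiset_periodicOrbit : (periodicOrbit f y).toMultiset.Nodup := by
  simpa [periodicOrbit, Cycle.nodup_coe_iff] using nodup_periodicOrbit (f := f) (x := y)

lemma count_iterate_of_map_eq_self [DecidableEq Y] (hf : Injective f) {S : Multiset Y}
    (hS : S.map f = S) (n : ℕ) : S.count (f^[n] y) = S.count y := by
  induction n with
  | zero => rfl
  | succ n ih =>
    rw [iterate_succ_apply', ← ih]
    nth_rewrite 1 [← hS]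
    exact Multiset.count_map_eq_count' f S hf _

lemma nsmul_toMultiset_periodicOrbit_le [DecidableEq Y] (hf : Injective f)
    (hy : y ∈ periodicPts f) {S : Multiset Y} (hS : S.map f = S) {q : ℕ}
    (hq : q ≤ S.count y) : q • (periodicOrbit f y).toMultiset ≤ S := by
  have hnodup := nodup_toMultiset_periodicOrbit (f := f) (y := y)
  refine Multiset.le_iff_count.mpr fun z => ?_
  rw [Multiset.count_nsmul, Multiset.count_eq_of_nodup hnodup]
  split_ifs with hz
  · obtain ⟨n, rfl⟩ := (mem_periodicOrbit_iff hy).mp hz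
    rw [mul_one, count_iterate_of_map_eq_self hf hS]
    exact hq
  · simp

end Function

section FixedMultisets

variable {Y : Type*} [Fintype Y] [DecidableEq Y] {f : Y → Y}

open Function in
lemma card_filter_map_eq_self_and_le_count (hf : Injective f) {y : Y} (hy : y ∈ periodicPts f)
    (q k : ℕ) :
    #{S : Sym Y k | Sym.map f S = S ∧ q ≤ S.toMultiset.count y} =
      if q * minimalPeriod f y ≤ k then
        #{T : Sym Y (k - q * minimalPeriod f y) | Sym.map f T = T}
      else 0 := by
  set O := (periodicOrbit f y).toMultiset
  have hcard : Multiset.card (q • O) = q * minimalPeriod f y := by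
    simp [O, Cycle.card_toMultiset]
  have hcount : O.count y = 1 :=
    Multiset.count_eq_one_of_mem nodup_toMultiset_periodicOrbit
      (by simpa [O, periodicOrbit] using self_mem_periodicOrbit hy)
  have hfilter : #{S : Sym Y k | Sym.map f S = S ∧ q ≤ S.toMultiset.count y} =
      ∑ S : Sym Y k with q • O ≤ S.toMultiset, if (S : Multiset Y).map f = S then 1 else 0 := by
    rw [card_eq_sum_ones, sum_filter, sum_filter]
    refine sum_congr rfl fun S _ => ?_
    by_cases hS : (S : Multiset Y).map f = S
    · have : q ≤ S.toMultiset.count y ↔ q • O ≤ S :=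
        ⟨nsmul_toMultiset_periodicOrbit_le hf hy hS, fun h => by
          simpa [hcount] using Multiset.count_le_of_le y h⟩
      simp [Sym.map_eq_self_iff, hS, this]
    · simp [Sym.map_eq_self_iff, hS]
  rw [hfilter]
  split_ifs with hk
  · rw [Sym.sum_filter_le_eq_sum_add _ (hcard ▸ hk) (fun S => if S.map f = S then 1 else 0),
      hcard, card_eq_sum_ones, sum_filter]
    refine sum_congr rfl fun T _ => ?_
    simp [Sym.map_eq_self_iff, Multiset.map_nsmul, map_toMultiset_periodicOrbit hy, O]
  · refine sum_eq_zero fun S hS => absurd ?_ hk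
    rw [← hcard, ← S.card_coe]
    exact Multiset.card_le_card (mem_filter.mp hS).2

open Function in
theorem card_filter_sym_map_eq_self_recurrence (hf : Injective f) (k : ℕ) :
    k * #{S : Sym Y k | Sym.map f S = S} =
      ∑ r ∈ Icc 1 k, #{y | f^[r] y = y} * #{T : Sym Y (k - r) | Sym.map f T = T} := by
  have hper (y : Y) : y ∈ periodicPts f := hf.mem_periodicPts y
  calc k * #{S : Sym Y k | Sym.map f S = S}
      = ∑ y, ∑ q ∈ Icc 1 k, #{S : Sym Y k | Sym.map f S = S ∧ q ≤ S.toMultiset.count y} := by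
        rw [card_filter, ← smul_eq_mul, Sym.nsmul_sum_eq_sum_sum_filter_le_count]
        simp_rw [card_filter, sum_filter, ← ite_and, and_comm]
    _ = ∑ y, ∑ r ∈ Icc 1 k,
          if minimalPeriod f y ∣ r then #{T : Sym Y (k - r) | Sym.map f T = T} else 0 := by
        simp_rw [card_filter_map_eq_self_and_le_count hf (hper _)]
        exact sum_congr rfl fun y _ => sum_Icc_ite_mul_le_eq_sum_Icc_ite_dvd
          (minimalPeriod_pos_of_mem_periodicPts (hper y)) k
          (fun r => #{T : Sym Y (k - r) | Sym.map f T = T})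
    _ = _ := by
        rw [sum_comm]
        refine sum_congr rfl fun r _ => ?_
        simp_rw [card_filter, sum_mul, ite_mul, one_mul, zero_mul,
          ← isPeriodicPt_iff_minimalPeriod_dvd]
        rfl

end FixedMultisets

def PowerSumsCountFixedPoints {Y ι R : Type*} [Fintype Y] [DecidableEq Y] [Fintype ι]
    [Semiring R] (f : Y → Y) (w : ι → R) : Prop :=
  ∀ r, 0 < r → (#{y | f^[r] y = y} : R) = ∑ i, w i ^ r

namespace PowerSumsCountFixedPoints

variable {Y ι R : Type*} [Fintype Y] [DecidableEq Y] [Fintype ι] [CommSemiring R]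
  {f : Y → Y} {w : ι → R}

lemma iterate (h : PowerSumsCountFixedPoints f w) {t : ℕ} (ht : 0 < t) :
    PowerSumsCountFixedPoints f^[t] (fun i => w i ^ t) := fun r hr => by
  simp_rw [← iterate_mul, ← pow_mul]
  exact h _ (Nat.mul_pos ht hr)

theorem card_filter_sym_map_eq_self [DecidableEq ι] [IsAddTorsionFree R] (hf : Injective f)
    (h : PowerSumsCountFixedPoints f w) (k : ℕ) :
    (#{S : Sym Y k | Sym.map f S = S} : R) = ∑ s : Sym ι k, ((s : Multiset ι).map w).prod := by
  refine congrFun (eq_of_nsmul_eq_sum_Icc (p := fun r => ∑ i, w i ^ r)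
    (a := fun k => (#{S : Sym Y k | Sym.map f S = S} : R)) ?_ (fun k => ?_)
    (nsmul_sum_sym_prod_map_eq w)) k
  · simp [Sym.eq_nil_of_card_zero]
  · rw [nsmul_eq_mul, ← Nat.cast_mul, card_filter_sym_map_eq_self_recurrence hf]
    push_cast
    exact sum_congr rfl fun r hr => by rw [h r (mem_Icc.mp hr).1]

theorem sym [DecidableEq ι] [IsAddTorsionFree R] (hf : Injective f)
    (h : PowerSumsCountFixedPoints f w) (k : ℕ) :
    PowerSumsCountFixedPoints (Sym.map f : Sym Y k → Sym Y k)
      (fun s : Sym ι k => ((s : Multiset ι).map w).prod) := fun r hr => by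
  simp_rw [Sym.iterate_map, ← Multiset.prod_map_pow]
  exact (h.iterate hr).card_filter_sym_map_eq_self (hf.iterate r) k

end PowerSumsCountFixedPoints

lemma Finsupp.sum_support_mul_eq_sum_comp {α ι R : Type*} [Fintype ι] [DecidableEq α]
    [Semiring R] (a : α →₀ ℕ) (D : ι → α) (hD : ∀ d, #{j | D j = d} = a d) (g : α → R) :
    ∑ d ∈ a.support, (a d : R) * g d = ∑ j, g (D j) := by
  rw [← sum_fiberwise_of_maps_to (t := a.support) (g := D) fun j _ => ?_]
  · refine Finset.sum_congr rfl fun d _ => ?_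
    rw [Finset.sum_congr rfl fun j hj => by rw [(mem_filter.mp hj).2], sum_const, hD,
      nsmul_eq_mul]
  · rw [Finsupp.mem_support_iff, ← hD]
    exact card_ne_zero_of_mem (mem_filter.mpr ⟨mem_univ j, rfl⟩)

lemma prod_zpow_sum_map_eq_prod_map_prod {ι κ G₀ : Type*} [Fintype ι] [CommGroupWithZero G₀]
    {z : ι → G₀} (hz : ∀ i, z i ≠ 0) (e : κ → ι → ℤ) (M : Multiset κ) :
    ∏ i, z i ^ (M.map (e · i)).sum = (M.map fun x => ∏ i, z i ^ e x i).prod := by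
  induction M using Multiset.induction_on with
  | empty => simp
  | cons x M ih => simp [zpow_add₀ (hz _), prod_mul_distrib, ih]

theorem multisubsets_of_multisubsets_CSP_general (m : ℕ) (C : Fin m → Type)
    [∀ i, Group (C i)] [∀ i, Fintype (C i)]
    (X : Type) [Fintype X] [MulAction (∀ i, C i) X]
    (ω : ∀ i, C i →* ℂˣ)
    (a : (Fin m → ℤ) →₀ ℕ) (N : ℕ)
    (D : Fin N → (Fin m → ℤ))
    (hD : ∀ d, (Finset.univ.filter (fun j => D j = d)).card = a d)
    (hCSP : ∀ c : ∀ i, C i,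
      (Nat.card {x : X | c • x = x} : ℂ) =
      ∑ d ∈ a.support, (a d : ℂ) * ∏ i, ((ω i (c i) : ℂ) ^ (d i)))
    (m' k : ℕ) :
    ∀ c : ∀ i, C i,
      (Nat.card {S : Sym (Sym X m') k |
          Sym.map (fun s => Sym.map (fun x => c • x) s) S = S} : ℂ) =
      ∑ S : Sym (Sym (Fin N) m') k, ∏ i,
        ((ω i (c i) : ℂ) ^
          (((S : Multiset (Sym (Fin N) m')).map
            (fun s => ((s : Multiset (Fin N)).map (fun j => D j i)).sum)).sum)) := by
  intro c
  classical
  have hinj : Injective (fun x : X => c • x) := MulAction.injective c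
  have hX : PowerSumsCountFixedPoints (fun x : X => c • x)
      (fun j => ∏ i, (ω i (c i) : ℂ) ^ D j i) := fun r _ => by
    rw [smul_iterate, ← Set.toFinset_ofPred, ← Nat.card_eq_card_toFinset, hCSP,
      Finsupp.sum_support_mul_eq_sum_comp a D hD]
    refine sum_congr rfl fun j _ => ?_
    rw [← prod_pow]
    refine prod_congr rfl fun i _ => ?_
    rw [Pi.pow_apply, map_pow, Units.val_pow_eq_pow_val, ← zpow_natCast, ← zpow_mul, mul_comm,
      zpow_mul, zpow_natCast]
  rw [Nat.card_eq_card_toFinset, Set.toFinset_ofPred,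
    (hX.sym hinj m').card_filter_sym_map_eq_self (Sym.map_injective hinj m') k]
  refine sum_congr rfl fun S _ => ?_
  have hz (i : Fin m) : (ω i (c i) : ℂ) ≠ 0 := Units.ne_zero _
  -- The statement coerces `S` to `Multiset (Multiset (Fin N))` through the multiset monad.
  simp only [Multiset.bind_def, Multiset.pure_def, Multiset.bind_singleton, Multiset.map_map,
    Function.comp_def]
  rw [prod_zpow_sum_map_eq_prod_map_prod hz
    fun (s : Sym (Fin N) m') i => ((s : Multiset (Fin N)).map (D · i)).sum]
  exact congrArg _
    (Multiset.map_congr rfl fun s _ => (prod_zpow_sum_map_eq_prod_map_prod hz D s).symm)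

/-- **Theorem (multisets of multisets).**
Suppose the triple `(X, X(u), 𝒞)` exhibits the CSP, where `𝒞 = C₁ × ⋯ × C_m`
is a product of finite cyclic groups with injective characters `ωᵢ` and
`X(u) = Σ_d a_d u^d` is a Laurent polynomial with nonnegative integer
coefficients.  Choose a list `D : Fin N → ℤ^m` of exponent vectors in which
each `d` occurs exactly `a_d` times (so `N = Σ_d a_d = |X|`).  The plethysm
`h_k[h_{m'}[X(u)]]` is then the sum, over `k`-element multisubsets `S` of the
set of `m'`-element multisubsets of `Fin N`, of `u` raised to the total
exponent vector of `S`.  Then the triple consisting of the set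
`Sym (Sym X m') k` of `k`-element multisubsets of the set of `m'`-element
multisubsets of `X` (with the induced action), `h_k[h_{m'}[X(u)]]`, and `𝒞`,
also exhibits the CSP. -/
theorem multisubsets_of_multisubsets_CSP (m : ℕ) (C : Fin m → Type)
    [∀ i, Group (C i)] [∀ i, Fintype (C i)] (hcyc : ∀ i, IsCyclic (C i))
    (X : Type) [Fintype X] [MulAction (∀ i, C i) X]
    (ω : ∀ i, C i →* ℂˣ) (hω : ∀ i, Function.Injective (ω i))
    (a : (Fin m → ℤ) →₀ ℕ) (N : ℕ) (hN : Nat.card X = N)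
    (D : Fin N → (Fin m → ℤ))
    (hD : ∀ d, (Finset.univ.filter (fun j => D j = d)).card = a d)
    (hCSP : ∀ c : ∀ i, C i,
      (Nat.card {x : X | c • x = x} : ℂ) =
      ∑ d ∈ a.support, (a d : ℂ) * ∏ i, ((ω i (c i) : ℂ) ^ (d i)))
    (m' k : ℕ) :
    ∀ c : ∀ i, C i,
      (Nat.card {S : Sym (Sym X m') k |
          Sym.map (fun s => Sym.map (fun x => c • x) s) S = S} : ℂ) =
      ∑ S : Sym (Sym (Fin N) m') k, ∏ i,
        ((ω i (c i) : ℂ) ^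
          (((S : Multiset (Sym (Fin N) m')).map
            (fun s => ((s : Multiset (Fin N)).map (fun j => D j i)).sum)).sum)) :=
  multisubsets_of_multisubsets_CSP_general m C X ω a N D hD hCSP m' k
end

section
/- Let ℓ be a positive integer and let c be a permutation in the symmetric group S_ℓ acting on the set [ℓ] = {1,…,ℓ}. Then the cyclic group C = ⟨c⟩ acts nearly freely on [ℓ] if and only if the triple ([ℓ], [ℓ]_u, C) exhibits the cyclic sieving phenomenon, where [ℓ]_u = 1 + u + u² + ⋯ + u^{ℓ−1}. -/
open MulAction Function Subgroup Finset

namespace NFei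
variable {ℓ : ℕ} (c : Equiv.Perm (Fin ℓ))

/-- The orbit size of `p` under the cyclic group generated by `c`. -/
noncomputable def T (p : Fin ℓ) : ℕ := Function.minimalPeriod (c • ·) p

variable {c}

lemma T_pos (p : Fin ℓ) : 0 < T c p := by
  apply Function.IsPeriodicPt.minimalPeriod_pos (orderOf_pos c)
  exact MulAction.isPeriodicPt_smul_iff.mpr (by rw [pow_orderOf_eq_one]; exact one_smul _ _)

lemma fix_iff_T_dvd {p : Fin ℓ} {k : ℕ} : c ^ k • p = p ↔ T c p ∣ k :=
  MulAction.pow_smul_eq_iff_minimalPeriod_dvd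

lemma T_dvd_orderOf (p : Fin ℓ) : T c p ∣ orderOf c := by
  rw [← fix_iff_T_dvd, pow_orderOf_eq_one]; exact one_smul _ _

lemma orbit_ncard (p : Fin ℓ) : (MulAction.orbit (Subgroup.zpowers c) p).ncard = T c p := by
  rw [← Nat.card_coe_set_eq, Nat.card_congr (MulAction.orbitZPowersEquiv c p), Nat.card_zmod]
  rfl

lemma T_eq_one_iff {p : Fin ℓ} : T c p = 1 ↔ c • p = p :=
  Function.minimalPeriod_eq_one_iff_isFixedPt

lemma orbit_singleton_iff {p : Fin ℓ} :
    MulAction.orbit (Subgroup.zpowers c) p = {p} ↔ T c p = 1 := by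
  constructor
  · intro h
    rw [T_eq_one_iff]
    have : (⟨c, Subgroup.mem_zpowers c⟩ : Subgroup.zpowers c) • p ∈
        MulAction.orbit (Subgroup.zpowers c) p := MulAction.mem_orbit _ _
    rw [h] at this
    exact this
  · intro h
    apply Set.eq_singleton_iff_unique_mem.mpr
    refine ⟨MulAction.mem_orbit_self p, ?_⟩
    rintro y ⟨σ, rfl⟩
    obtain ⟨k, hk⟩ := Subgroup.mem_zpowers_iff.mp σ.2
    show (σ : Equiv.Perm (Fin ℓ)) • p = p
    rw [← hk]
    exact MulAction.zpow_smul_eq_iff_minimalPeriod_dvd.mpr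
      (by rw [show minimalPeriod (c • ·) p = T c p from rfl, h]; exact one_dvd _)

lemma orbit_subset_fix {x : Fin ℓ} {k : ℕ} (h : c ^ k • x = x) :
    MulAction.orbit (Subgroup.zpowers c) x ⊆ {p : Fin ℓ | c ^ k • p = p} := by
  rintro y ⟨σ, rfl⟩
  obtain ⟨m, hm⟩ := Subgroup.mem_zpowers_iff.mp σ.2
  show c ^ k • (σ : Equiv.Perm (Fin ℓ)) • x = (σ : Equiv.Perm (Fin ℓ)) • x
  rw [← hm, ← mul_smul, ← zpow_natCast, ← zpow_add, add_comm, zpow_add, mul_smul, zpow_natCast, h]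

variable (c)

/-- a natural exponent representing σ ∈ ⟨c⟩ as a power of c. -/
noncomputable def nexpo (σ : Subgroup.zpowers c) : ℕ :=
  ((Subgroup.mem_zpowers_iff.mp σ.2).choose % (orderOf c : ℤ)).toNat

variable {c}

lemma nexpo_spec (σ : Subgroup.zpowers c) : c ^ nexpo c σ = (σ : Equiv.Perm (Fin ℓ)) := by
  obtain h := (Subgroup.mem_zpowers_iff.mp σ.2).choose_spec
  set k := (Subgroup.mem_zpowers_iff.mp σ.2).choose with hk
  have hnn : 0 ≤ k % (orderOf c : ℤ) :=
    Int.emod_nonneg k (by exact_mod_cast (orderOf_pos c).ne')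
  calc c ^ nexpo c σ = c ^ ((k % (orderOf c : ℤ)).toNat : ℤ) := (zpow_natCast c _).symm
    _ = c ^ (k % (orderOf c : ℤ)) := by rw [Int.toNat_of_nonneg hnn]
    _ = c ^ k := zpow_mod_orderOf c k
    _ = (σ : Equiv.Perm (Fin ℓ)) := h

/-- ω sending `c ^ m ↦ z ^ m`, whenever the order of `z` divides that of `c`. -/
noncomputable def omegaHom (z : ℂˣ) (hz : orderOf z ∣ orderOf c) :
    Subgroup.zpowers c →* ℂˣ where
  toFun σ := z ^ nexpo c σ
  map_one' := by
    have h1 : c ^ nexpo c (1 : Subgroup.zpowers c) = c ^ (0 : ℕ) := by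
      rw [nexpo_spec]; simp
    rw [pow_eq_pow_iff_modEq] at h1
    exact pow_eq_pow_iff_modEq.mpr (h1.of_dvd hz)
  map_mul' σ τ := by
    have h1 : c ^ nexpo c (σ * τ) = c ^ (nexpo c σ + nexpo c τ) := by
      rw [nexpo_spec, pow_add, nexpo_spec, nexpo_spec]; rfl
    rw [pow_eq_pow_iff_modEq] at h1
    rw [← pow_add]
    exact pow_eq_pow_iff_modEq.mpr (h1.of_dvd hz)

lemma omegaHom_eq_pow {z : ℂˣ} {hz : orderOf z ∣ orderOf c} {σ : Subgroup.zpowers c} {m : ℕ}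
    (h : (σ : Equiv.Perm (Fin ℓ)) = c ^ m) : omegaHom z hz σ = z ^ m := by
  have h1 : c ^ nexpo c σ = c ^ m := by rw [nexpo_spec, h]
  rw [pow_eq_pow_iff_modEq] at h1
  exact pow_eq_pow_iff_modEq.mpr (h1.of_dvd hz)

lemma omegaHom_injective {z : ℂˣ} (hz : orderOf z = orderOf c) :
    Function.Injective (omegaHom (c := c) z (dvd_of_eq hz)) := by
  intro σ τ h
  have h1 : z ^ nexpo c σ = z ^ nexpo c τ := h
  rw [pow_eq_pow_iff_modEq, hz, ← pow_eq_pow_iff_modEq (x := c)] at h1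
  apply Subtype.ext
  rw [← nexpo_spec σ, ← nexpo_spec τ, h1]

lemma sum_pow_eq_zero {m : ℕ} {z : ℂ} (h1 : z ≠ 1) (hl : z ^ m = 1) :
    ∑ j ∈ range m, z ^ j = 0 := by
  have h := geom_sum_mul z m
  rw [hl, sub_self] at h
  rcases mul_eq_zero.mp h with h' | h'
  · exact h'
  · exact absurd (sub_eq_zero.mp h') h1

lemma sum_pow_eq_one {m : ℕ} (hm : 0 < m) {z : ℂ} (h1 : z ≠ 1) (hl : z ^ (m - 1) = 1) :
    ∑ j ∈ range m, z ^ j = 1 := by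
  have h := geom_sum_mul z m
  have hz : z ^ m = z := by
    conv_lhs => rw [← Nat.succ_pred_eq_of_pos hm, pow_succ, Nat.pred_eq_sub_one, hl, one_mul]
  rw [hz] at h
  exact mul_right_cancel₀ (sub_ne_zero.mpr h1) (by rw [one_mul]; exact h)

lemma conj_trick {n m N : ℕ} {z : ℂ} (hn : n ≠ 0) (hz : z ^ n = 1) (hm : 0 < m)
    (h : (N : ℂ) = ∑ j ∈ range m, z ^ j) : z ^ m = 1 ∨ z ^ (m - 1) = 1 := by
  have hz0 : z ≠ 0 := by
    intro h0; rw [h0, zero_pow hn] at hz; exact zero_ne_one hz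
  have hnorm : ‖z‖ = 1 := Complex.norm_eq_one_of_pow_eq_one hz hn
  have hconj : (starRingEnd ℂ) z = z⁻¹ := (Complex.inv_eq_conj hnorm).symm
  have key : (N : ℂ) = ∑ j ∈ range m, (z⁻¹) ^ j := by
    conv_lhs => rw [show ((N : ℂ)) = (starRingEnd ℂ) (N : ℂ) by simp, h]
    rw [map_sum]
    exact Finset.sum_congr rfl fun j _ => by rw [map_pow, hconj]
  have step : z ^ (m - 1) * (N : ℂ) = (N : ℂ) := by
    conv_lhs => rw [key]
    rw [Finset.mul_sum]
    have he : ∀ j ∈ range m, z ^ (m - 1) * (z⁻¹) ^ j = z ^ (m - 1 - j) := by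
      intro j hj
      have hj' : j ≤ m - 1 := Nat.le_pred_of_lt (mem_range.mp hj)
      rw [inv_pow, mul_inv_eq_iff_eq_mul₀ (pow_ne_zero _ hz0), ← pow_add,
        Nat.sub_add_cancel hj']
    rw [Finset.sum_congr rfl he, Finset.sum_range_reflect (fun j => z ^ j) m, ← h]
  rcases eq_or_ne N 0 with hN | hN
  · left
    rw [hN, Nat.cast_zero] at h
    have hg := geom_sum_mul z m
    rw [← h, zero_mul] at hg
    exact sub_eq_zero.mp hg.symm
  · right
    exact mul_right_cancel₀ (Nat.cast_ne_zero.mpr hN) (by rw [one_mul]; exact step)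

lemma sum_orbits_card {α : Type*} [Fintype α] (G : Type*) [Group G] [MulAction G α]
    [DecidableEq (MulAction.orbitRel.Quotient G α)]
    [Fintype (MulAction.orbitRel.Quotient G α)] :
    Fintype.card α =
      ∑ ω : MulAction.orbitRel.Quotient G α, (MulAction.orbit G ω.out).ncard := by
  classical
  have h := Finset.card_eq_sum_card_fiberwise
    (f := fun p : α => (Quotient.mk'' p : MulAction.orbitRel.Quotient G α))
    (s := Finset.univ) (t := Finset.univ) (fun x _ => Finset.mem_univ _)
  rw [Finset.card_univ] at h
  rw [h]
  refine Finset.sum_congr rfl fun ω _ => ?_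
  have horb : MulAction.orbit G ω.out = MulAction.orbitRel.Quotient.orbit ω :=
    (MulAction.orbitRel.Quotient.orbit_eq_orbit_out _ Quotient.out_eq').symm
  rw [horb, Set.ncard_eq_toFinset_card']
  congr 1
  ext p
  simp [MulAction.orbitRel.Quotient.mem_orbit]

end NFei

open MulAction Function Subgroup Finset NFei


/-- A group `C` acts *nearly freely* on `X` if either all orbits have the same
size, or there is exactly one singleton orbit and all non-singleton orbits have
the same size. -/
def NearlyFree (C X : Type*) [Group C] [MulAction C X] : Prop :=
  (∀ x y : X, (MulAction.orbit C x).ncard = (MulAction.orbit C y).ncard) ∨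
  ((∃! x : X, MulAction.orbit C x = {x}) ∧
    ∀ x y : X, MulAction.orbit C x ≠ {x} → MulAction.orbit C y ≠ {y} →
      (MulAction.orbit C x).ncard = (MulAction.orbit C y).ncard)

/-- **Proposition.**  For a permutation `c ∈ S_ℓ` of `[ℓ]`, the cyclic group
`C = ⟨c⟩` acts nearly freely on `[ℓ]` if and only if the triple
`([ℓ], [ℓ]_u, C)` exhibits the cyclic sieving phenomenon, where
`[ℓ]_u = 1 + u + u² + ⋯ + u^{ℓ-1}`. -/
theorem nearlyFree_iff_CSP (ℓ : ℕ) (hℓ : 0 < ℓ) (c : Equiv.Perm (Fin ℓ)) :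
    NearlyFree (Subgroup.zpowers c) (Fin ℓ) ↔
    ∃ ω : Subgroup.zpowers c →* ℂˣ, Function.Injective ω ∧
      ∀ σ : Subgroup.zpowers c,
        (Nat.card {p : Fin ℓ | σ • p = p} : ℂ) =
        ∑ j ∈ Finset.range ℓ, (ω σ : ℂ) ^ j := by
  set n := orderOf c with hn
  have hn0 : 0 < n := orderOf_pos c
  constructor
  · -- forward
    intro hNF
    classical
    -- structural consequences of NearlyFree
    have main : ((∀ p, T c p = n) ∧ n ∣ ℓ) ∨
        (Nat.card {p : Fin ℓ | c • p = p} = 1 ∧ (∀ p, T c p = 1 ∨ T c p = n) ∧ n ∣ ℓ - 1) := by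
      have ordereq : ∀ d : ℕ, (∀ p, T c p ∣ d) → (∃ p, T c p = d) → n = d := by
        intro d hdvd ⟨y, hy⟩
        have hpow : c ^ d = 1 := by
          apply Equiv.ext
          intro p
          exact fix_iff_T_dvd.mpr (hdvd p)
        exact Nat.dvd_antisymm (orderOf_dvd_of_pow_eq_one hpow) (hy ▸ T_dvd_orderOf y)
      rcases hNF with hL | ⟨⟨x₀, hx₀, hx₀u⟩, hR⟩
      · -- all orbits same size
        left
        set p₀ : Fin ℓ := ⟨0, hℓ⟩
        have hTall : ∀ p, T c p = T c p₀ := by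
          intro p
          have := hL p p₀
          rwa [orbit_ncard, orbit_ncard] at this
        have hnd : n = T c p₀ := ordereq _ (fun p => (hTall p) ▸ dvd_rfl) ⟨p₀, rfl⟩
        have hTn : ∀ p, T c p = n := fun p => (hTall p).trans hnd.symm
        refine ⟨hTn, ?_⟩
        have hsum := sum_orbits_card (α := Fin ℓ) (Subgroup.zpowers c)
        rw [Fintype.card_fin] at hsum
        rw [Finset.sum_congr rfl (fun ω _ => by rw [orbit_ncard, hTn])] at hsum
        rw [Finset.sum_const, smul_eq_mul] at hsum
        exact Dvd.intro_left _ hsum.symm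
      · -- one singleton orbit
        by_cases hall : ∀ p : Fin ℓ, T c p = 1
        · left
          have hnd : n = 1 := ordereq 1 (fun p => (hall p) ▸ dvd_rfl) ⟨x₀, hall x₀⟩
          exact ⟨fun p => (hall p).trans hnd.symm, hnd ▸ one_dvd ℓ⟩
        · right
          push_neg at hall
          obtain ⟨y, hy⟩ := hall
          set d := T c y with hd
          have hTall : ∀ p, T c p = 1 ∨ T c p = d := by
            intro p
            by_cases h1 : T c p = 1
            · exact Or.inl h1
            · right
              have := hR p y (fun h => h1 (orbit_singleton_iff.mp h))
                (fun h => hy (orbit_singleton_iff.mp h))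
              rwa [orbit_ncard, orbit_ncard] at this
          have hnd : n = d := by
            apply ordereq d _ ⟨y, rfl⟩
            intro p
            rcases hTall p with h | h
            · rw [h]; exact one_dvd d
            · rw [h]
          have hfixset : {p : Fin ℓ | c • p = p} = {x₀} := by
            ext p
            simp only [Set.mem_setOf_eq, Set.mem_singleton_iff]
            constructor
            · intro h
              exact hx₀u p (orbit_singleton_iff.mpr (T_eq_one_iff.mpr h))
            · rintro rfl
              exact T_eq_one_iff.mp (orbit_singleton_iff.mp hx₀)
          have hcard1 : Nat.card {p : Fin ℓ | c • p = p} = 1 := by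
            rw [hfixset]; simp
          refine ⟨hcard1, fun p => by rw [← hnd] at hTall; exact hTall p, ?_⟩
          -- counting: ℓ - 1 is a multiple of n
          have hsum := sum_orbits_card (α := Fin ℓ) (Subgroup.zpowers c)
          rw [Fintype.card_fin] at hsum
          set Ω := MulAction.orbitRel.Quotient (Subgroup.zpowers c) (Fin ℓ)
          set ω₀ : Ω := Quotient.mk'' x₀ with hω₀
          have hx₀mem : x₀ ∈ MulAction.orbit (Subgroup.zpowers c) ω₀.out := by
            rw [← MulAction.orbitRel.Quotient.orbit_eq_orbit_out ω₀ Quotient.out_eq']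
            exact (MulAction.orbitRel.Quotient.mem_orbit).mpr rfl
          have horb0 : MulAction.orbit (Subgroup.zpowers c) ω₀.out
              = MulAction.orbit (Subgroup.zpowers c) x₀ := (MulAction.orbit_eq_iff.mpr hx₀mem).symm
          have hfω₀ : (MulAction.orbit (Subgroup.zpowers c) ω₀.out).ncard = 1 := by
            rw [horb0, orbit_ncard, T_eq_one_iff]
            exact T_eq_one_iff.mp (orbit_singleton_iff.mp hx₀)
          have herase : ∀ ω ∈ Finset.univ.erase ω₀,
              (MulAction.orbit (Subgroup.zpowers c) ω.out).ncard = n := by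
            intro ω hω
            rw [orbit_ncard]
            rcases hTall ω.out with h1 | hdd
            · exfalso
              have : ω.out = x₀ := hx₀u ω.out (orbit_singleton_iff.mpr h1)
              apply (Finset.mem_erase.mp hω).1
              rw [hω₀, ← this, Quotient.out_eq']
            · rw [hdd, hnd]
          rw [← Finset.add_sum_erase _ _ (Finset.mem_univ ω₀), hfω₀,
            Finset.sum_congr rfl herase, Finset.sum_const, smul_eq_mul] at hsum
          refine ⟨(Finset.univ.erase ω₀).card, ?_⟩
          rw [mul_comm]
          omega
    -- construct the character
    have hexp : IsPrimitiveRoot (Complex.exp (2 * Real.pi * Complex.I / n)) n :=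
      Complex.isPrimitiveRoot_exp n hn0.ne'
    set ζc : ℂ := Complex.exp (2 * Real.pi * Complex.I / n) with hζc
    set ζu : ℂˣ := Units.mk0 ζc (Complex.exp_ne_zero _) with hζu
    have hζval : (ζu : ℂ) = ζc := rfl
    have hordζc : orderOf ζc = n := hexp.eq_orderOf.symm
    have hordζu : orderOf ζu = n := by rw [← orderOf_units, hζval, hordζc]
    refine ⟨omegaHom ζu (dvd_of_eq hordζu), omegaHom_injective hordζu, ?_⟩
    intro σ
    set m := nexpo c σ with hm
    have hσ : (σ : Equiv.Perm (Fin ℓ)) = c ^ m := (nexpo_spec σ).symm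
    have hω : omegaHom ζu (dvd_of_eq hordζu) σ = ζu ^ m := omegaHom_eq_pow hσ
    have hωval : ((omegaHom ζu (dvd_of_eq hordζu) σ : ℂˣ) : ℂ) = ζc ^ m := by
      rw [hω, Units.val_pow_eq_pow_val, hζval]
    have hsetσ : {p : Fin ℓ | σ • p = p} = {p : Fin ℓ | c ^ m • p = p} := by
      ext p
      show (σ : Equiv.Perm (Fin ℓ)) • p = p ↔ _
      rw [hσ]
      exact Iff.rfl
    rw [hωval, hsetσ]
    by_cases hdvd : n ∣ m
    · -- trivial evaluation : everything is fixed, sum of ones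
      have hz1 : ζc ^ m = 1 := by
        rw [← hordζc] at hdvd
        exact orderOf_dvd_iff_pow_eq_one.mp hdvd
      have hfix : {p : Fin ℓ | c ^ m • p = p} = Set.univ := by
        apply Set.eq_univ_of_forall
        intro p
        show c ^ m • p = p
        apply fix_iff_T_dvd.mpr
        rcases main with ⟨hTn, _⟩ | ⟨_, hT1n, _⟩
        · rw [hTn]; exact hdvd
        · rcases hT1n p with h | h
          · rw [h]; exact one_dvd m
          · rw [h]; exact hdvd
      have hcard : Nat.card (Set.univ : Set (Fin ℓ)) = ℓ := by
        rw [Nat.card_coe_set_eq, Set.ncard_univ, Nat.card_eq_fintype_card, Fintype.card_fin]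
      rw [hfix, hcard, hz1]
      simp
    · have hz1 : ζc ^ m ≠ 1 := fun h =>
        hdvd (hordζc ▸ orderOf_dvd_of_pow_eq_one h)
      rcases main with ⟨hTn, hnl⟩ | ⟨hcard1, hT1n, hnl⟩
      · -- free case : no fixed points, sum is zero
        have hfix : {p : Fin ℓ | c ^ m • p = p} = ∅ := by
          apply Set.eq_empty_iff_forall_notMem.mpr
          intro p hp
          exact hdvd (hTn p ▸ fix_iff_T_dvd.mp hp)
        have hzl : (ζc ^ m) ^ ℓ = 1 := by
          rw [← pow_mul]
          exact orderOf_dvd_iff_pow_eq_one.mp (by rw [hordζc]; exact hnl.mul_left m)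
        rw [hfix, sum_pow_eq_zero hz1 hzl]
        simp
      · -- nearly free case : exactly one fixed point, sum is one
        have hfix : {p : Fin ℓ | c ^ m • p = p} = {p : Fin ℓ | c • p = p} := by
          ext p
          simp only [Set.mem_setOf_eq]
          constructor
          · intro hp
            rcases hT1n p with h | h
            · exact T_eq_one_iff.mp h
            · exact absurd (h ▸ fix_iff_T_dvd.mp hp) hdvd
          · intro hp
            exact fix_iff_T_dvd.mpr (by rw [T_eq_one_iff.mpr hp]; exact one_dvd m)
        have hzl : (ζc ^ m) ^ (ℓ - 1) = 1 := by
          rw [← pow_mul]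
          exact orderOf_dvd_iff_pow_eq_one.mp (by rw [hordζc]; exact hnl.mul_left m)
        rw [hfix, sum_pow_eq_one hℓ hz1 hzl, hcard1]
        simp
  · -- converse
    rintro ⟨ω, hinj, heq⟩
    set ζu : ℂˣ := ω ⟨c, Subgroup.mem_zpowers c⟩ with hζu
    have hordζu : orderOf ζu = n := by
      rw [hζu, orderOf_injective ω hinj, ← Subgroup.orderOf_coe]
    set ζc : ℂ := (ζu : ℂ) with hζc
    have hordζc : orderOf ζc = n := by rw [hζc, orderOf_units, hordζu]
    have hζn : ζc ^ n = 1 := by rw [← hordζc]; exact pow_orderOf_eq_one ζc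
    have heqt : ∀ t : ℕ, (Nat.card {p : Fin ℓ | c ^ t • p = p} : ℂ) =
        ∑ j ∈ Finset.range ℓ, (ζc ^ t) ^ j := by
      intro t
      have h := heq ((⟨c, Subgroup.mem_zpowers c⟩ : Subgroup.zpowers c) ^ t)
      have hset : {p : Fin ℓ | ((⟨c, Subgroup.mem_zpowers c⟩ :
          Subgroup.zpowers c) ^ t) • p = p} = {p : Fin ℓ | c ^ t • p = p} := by
        ext p
        show (((⟨c, Subgroup.mem_zpowers c⟩ : Subgroup.zpowers c) ^ t :
          Subgroup.zpowers c) : Equiv.Perm (Fin ℓ)) • p = p ↔ _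
        rw [SubmonoidClass.coe_pow]
        exact Iff.rfl
      have hωt : ((ω ((⟨c, Subgroup.mem_zpowers c⟩ : Subgroup.zpowers c) ^ t) : ℂˣ) : ℂ)
          = ζc ^ t := by
        rw [map_pow, Units.val_pow_eq_pow_val, hζc, hζu]
      rw [hset, hωt] at h
      exact h
    -- positivity of the fixed point count at t = T c p
    have hfixpos : ∀ p : Fin ℓ, 0 < Nat.card {q : Fin ℓ | c ^ (T c p) • q = q} := by
      intro p
      have hp : p ∈ {q : Fin ℓ | c ^ (T c p) • q = q} := fix_iff_T_dvd.mpr dvd_rfl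
      have : Nonempty {q : Fin ℓ | c ^ (T c p) • q = q} := ⟨⟨p, hp⟩⟩
      exact Nat.card_pos
    by_cases hn1 : n = 1
    · -- trivial group : all orbits are singletons
      left
      intro x y
      have h1 : ∀ p : Fin ℓ, T c p = 1 := fun p =>
        Nat.dvd_one.mp (hn1 ▸ T_dvd_orderOf p)
      rw [orbit_ncard, orbit_ncard, h1, h1]
    · have hone : ∀ t : ℕ, 0 < t → t < n → n ∣ ℓ - 1 →
          Nat.card {p : Fin ℓ | c ^ t • p = p} = 1 := by
        intro t ht htn hnl
        have hz1 : ζc ^ t ≠ 1 := by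
          intro h
          have := hordζc ▸ orderOf_dvd_of_pow_eq_one h
          exact absurd (Nat.le_of_dvd ht this) (not_le.mpr htn)
        have hzl : (ζc ^ t) ^ (ℓ - 1) = 1 := by
          rw [← pow_mul]
          exact orderOf_dvd_iff_pow_eq_one.mp (by rw [hordζc]; exact hnl.mul_left t)
        have := heqt t
        rw [sum_pow_eq_one hℓ hz1 hzl] at this
        exact_mod_cast this
      have hzero : ∀ t : ℕ, 0 < t → t < n → n ∣ ℓ →
          Nat.card {p : Fin ℓ | c ^ t • p = p} = 0 := by
        intro t ht htn hnl
        have hz1 : ζc ^ t ≠ 1 := by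
          intro h
          have := hordζc ▸ orderOf_dvd_of_pow_eq_one h
          exact absurd (Nat.le_of_dvd ht this) (not_le.mpr htn)
        have hzl : (ζc ^ t) ^ ℓ = 1 := by
          rw [← pow_mul]
          exact orderOf_dvd_iff_pow_eq_one.mp (by rw [hordζc]; exact hnl.mul_left t)
        have := heqt t
        rw [sum_pow_eq_zero hz1 hzl] at this
        exact_mod_cast this
      -- from the t = 1 equation, n ∣ ℓ or n ∣ ℓ - 1
      have hdisj : n ∣ ℓ ∨ n ∣ ℓ - 1 := by
        have h1 := heqt 1
        simp only [pow_one] at h1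
        rcases conj_trick hn0.ne' hζn hℓ h1 with h | h
        · exact Or.inl (hordζc ▸ orderOf_dvd_of_pow_eq_one h)
        · exact Or.inr (hordζc ▸ orderOf_dvd_of_pow_eq_one h)
      rcases hdisj with hnl | hnl
      · -- free case
        left
        have hTn : ∀ p : Fin ℓ, T c p = n := by
          intro p
          by_contra hne
          have htlt : T c p < n :=
            lt_of_le_of_ne (Nat.le_of_dvd hn0 (T_dvd_orderOf p)) hne
          have := hzero (T c p) (T_pos p) htlt hnl
          exact absurd this (hfixpos p).ne'
        intro x y
        rw [orbit_ncard, orbit_ncard, hTn, hTn]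
      · -- nearly free case
        right
        have hTn : ∀ p : Fin ℓ, T c p ≠ 1 → T c p = n := by
          intro p hne1
          by_contra hne
          have htlt : T c p < n :=
            lt_of_le_of_ne (Nat.le_of_dvd hn0 (T_dvd_orderOf p)) hne
          have hcard := hone (T c p) (T_pos p) htlt hnl
          -- but the fixed set of c ^ T c p contains the whole orbit of p
          have hsub := orbit_subset_fix (c := c) (x := p) (fix_iff_T_dvd.mpr dvd_rfl)
          have hle : T c p ≤ Nat.card {q : Fin ℓ | c ^ (T c p) • q = q} := by
            have h1 : (MulAction.orbit (Subgroup.zpowers c) p).ncard ≤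
                ({q : Fin ℓ | c ^ (T c p) • q = q}).ncard :=
              Set.ncard_le_ncard hsub (Set.toFinite _)
            rw [orbit_ncard] at h1
            rw [Nat.card_coe_set_eq]
            exact h1
          rw [hcard] at hle
          have h2 : 2 ≤ T c p := by
            have := T_pos (c := c) p
            omega
          omega
        have hfix1 : Nat.card {p : Fin ℓ | c ^ 1 • p = p} = 1 :=
          hone 1 one_pos (Nat.lt_of_le_of_ne hn0 (Ne.symm hn1)) hnl
        have : ({p : Fin ℓ | c ^ 1 • p = p}).ncard = 1 := by
          rw [← Nat.card_coe_set_eq]; exact hfix1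
        obtain ⟨a, ha⟩ := Set.ncard_eq_one.mp this
        have hamem : c • a = a := by
          have : a ∈ {p : Fin ℓ | c ^ 1 • p = p} := ha ▸ rfl
          simpa using this
        constructor
        · refine ⟨a, orbit_singleton_iff.mpr (T_eq_one_iff.mpr hamem), ?_⟩
          intro y hy
          have hy1 : c ^ 1 • y = y := by
            simpa using T_eq_one_iff.mp (orbit_singleton_iff.mp hy)
          have : y ∈ {p : Fin ℓ | c ^ 1 • p = p} := hy1
          rw [ha] at this
          exact this
        · intro x y hx hy
          rw [orbit_ncard, orbit_ncard,
            hTn x (fun h => hx (orbit_singleton_iff.mpr h)),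
            hTn y (fun h => hy (orbit_singleton_iff.mpr h))]
end

section
/- Fix a positive integer ℓ. For each integer n (possibly negative), define, in the field ℚ(u,t) of rational functions in two variables, X_{n,ℓ}(u,t) := (t;t)_ℓ · Σ_{λ ⊢ ℓ} (ut)^{b(λ)} Π_{x ∈ λ} (1 − u^{n + c(x)}) / ((1 − u^{h(x)})(1 − t^{h(x)})), where the sum is over all partitions λ of ℓ and the product is over all cells x of λ (with u^{n+c(x)} understood as an element of ℚ(u), i.e. a negative power of u, when n + c(x) < 0). Then one has the reciprocity identity t^{ℓ(ℓ−1)/2} · X_{n,ℓ}(u, t^{−1}) = (−u^n)^ℓ · X_{−n,ℓ}(u, t) in ℚ(u,t). -/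
/-- The length `λ_{i+1}` of the `(i+1)`-st row (0-indexed `i`) of a
partition. -/
def rowLen {ℓ : ℕ} (p : Nat.Partition ℓ) (i : ℕ) : ℕ :=
  ((p.parts.sort (· ≤ ·)).reverse).getD i 0

/-- The length `λ'_{j+1}` of the `(j+1)`-st column (0-indexed `j`) of a
partition, i.e. the `(j+1)`-st part of the conjugate partition. -/
def colLen {ℓ : ℕ} (p : Nat.Partition ℓ) (j : ℕ) : ℕ :=
  (p.parts.filter (fun a => j < a)).card

/-- The cells of (the Young diagram of) a partition of `ℓ`, with 0-indexed
coordinates `(i, j)`: `(i,j)` is a cell iff `j < λ_{i+1}`. -/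
def cells {ℓ : ℕ} (p : Nat.Partition ℓ) : Finset (ℕ × ℕ) :=
  (Finset.range ℓ ×ˢ Finset.range ℓ).filter (fun x => x.2 < rowLen p x.1)

/-- The content `c(x) = j - i` of a cell `x = (i,j)` (0-indexed, which agrees
with the 1-indexed convention). -/
def content (x : ℕ × ℕ) : ℤ := (x.2 : ℤ) - (x.1 : ℤ)

/-- The hook length `h(x) = λ_i - j + λ'_j - i + 1` (1-indexed) of a cell
`x` of a partition; with 0-indexed coordinates this is
`(λ_{i+1} - j) + (λ'_{j+1} - i) - 1`. -/
def hookLen {ℓ : ℕ} (p : Nat.Partition ℓ) (x : ℕ × ℕ) : ℕ :=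
  (rowLen p x.1 - x.2) + (colLen p x.2 - x.1) - 1

/-- `b(λ) = Σ_{i ≥ 1} (i-1) λ_i`. -/
def bStat {ℓ : ℕ} (p : Nat.Partition ℓ) : ℕ :=
  ∑ i ∈ Finset.range ℓ, i * rowLen p i

/-- `X_{n,ℓ}(u,t) := (t;t)_ℓ · Σ_{λ ⊢ ℓ} (ut)^{b(λ)}
Π_{x ∈ λ} (1 - u^{n+c(x)}) / ((1 - u^{h(x)})(1 - t^{h(x)}))`,
evaluated at elements `u, t` of a field `K`, for an arbitrary integer `n`. -/
noncomputable def hookContentSum {K : Type*} [Field K] (ℓ : ℕ) (n : ℤ)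
    (u t : K) : K :=
  (∏ j ∈ Finset.range ℓ, (1 - t ^ (j + 1))) *
  ∑ p : Nat.Partition ℓ, (u * t) ^ bStat p *
    ∏ x ∈ cells p,
      (1 - u ^ (n + content x)) /
        ((1 - u ^ hookLen p x) * (1 - t ^ hookLen p x))

open Finset

namespace HookAux

lemma getD_le_of_forall_le {L : List ℕ} {a : ℕ} (h : ∀ b ∈ L, b ≤ a) (i : ℕ) :
    L.getD i 0 ≤ a := by
  rcases lt_or_ge i L.length with hi | hi
  · rw [List.getD_eq_getElem _ _ hi]
    exact h _ (List.getElem_mem _)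
  · rw [List.getD_eq_default _ _ hi]
    exact Nat.zero_le _

lemma sorted_filter_length (L : List ℕ) (hL : L.Pairwise (· ≥ ·)) (j i : ℕ) :
    i < (L.filter (fun a => decide (j < a))).length ↔ j < L.getD i 0 := by
  induction L generalizing i with
  | nil => simp
  | cons a L ih =>
    rw [List.pairwise_cons] at hL
    obtain ⟨ha, hL⟩ := hL
    by_cases h : j < a
    · rw [List.filter_cons_of_pos (by simpa using h)]
      cases i with
      | zero => simpa using h
      | succ i => simpa using ih hL i
    · rw [List.filter_cons_of_neg (by simpa using h)]
      have hnil : (L.filter (fun a => decide (j < a))) = [] := by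
        rw [List.filter_eq_nil_iff]
        intro b hb
        have : b ≤ a := ha b hb
        simp only [decide_eq_true_eq]
        omega
      rw [hnil]
      simp only [List.length_nil, Nat.not_lt_zero, false_iff, not_lt]
      cases i with
      | zero => simpa using not_lt.mp h
      | succ i =>
        simp only [List.getD_cons_succ]
        exact le_trans (getD_le_of_forall_le (fun b hb => ha b hb) i) (not_lt.mp h)

variable {ℓ : ℕ} (p : Nat.Partition ℓ)

lemma parts_eq_coe :
    p.parts = (((p.parts.sort (· ≤ ·)).reverse : List ℕ) : Multiset ℕ) := by
  rw [Multiset.coe_reverse, Multiset.sort_eq]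

lemma reverse_sorted : ((p.parts.sort (· ≤ ·)).reverse).Pairwise (· ≥ ·) := by
  have h : List.Pairwise (fun a b => b ≥ a) (p.parts.sort (· ≤ ·)) :=
    Multiset.pairwise_sort (s := p.parts) (r := (· ≤ ·))
  exact (List.pairwise_reverse).mpr h

lemma lt_colLen_iff (i j : ℕ) : i < colLen p j ↔ j < rowLen p i := by
  have hc : colLen p j
      = (((p.parts.sort (· ≤ ·)).reverse).filter (fun a => decide (j < a))).length := by
    unfold colLen
    conv_lhs => rw [parts_eq_coe p]
    rw [Multiset.filter_coe, Multiset.coe_card]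
  rw [hc]
  exact sorted_filter_length _ (reverse_sorted p) j i

lemma parts_card_le : Multiset.card p.parts ≤ ℓ := by
  have h : Multiset.card p.parts • 1 ≤ p.parts.sum :=
    Multiset.card_nsmul_le_sum (fun x hx => p.parts_pos hx)
  simpa [p.parts_sum] using h

lemma colLen_le (j : ℕ) : colLen p j ≤ ℓ :=
  le_trans (Multiset.card_le_card (Multiset.filter_le _ _)) (parts_card_le p)

lemma rowLen_le (i : ℕ) : rowLen p i ≤ ℓ := by
  unfold rowLen
  refine getD_le_of_forall_le (fun b hb => ?_) i
  have hb' : b ∈ p.parts := by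
    rw [parts_eq_coe p]
    exact_mod_cast hb
  have := Multiset.single_le_sum (fun x _ => Nat.zero_le x) b hb'
  simpa [p.parts_sum] using this

lemma mem_cells_iff (x : ℕ × ℕ) : x ∈ cells p ↔ x.2 < rowLen p x.1 := by
  unfold cells
  simp only [mem_filter, mem_product, mem_range]
  constructor
  · tauto
  · intro h
    refine ⟨⟨?_, lt_of_lt_of_le h (rowLen_le p x.1)⟩, h⟩
    have : x.1 < colLen p x.2 := (lt_colLen_iff p x.1 x.2).mpr h
    exact lt_of_lt_of_le this (colLen_le p x.2)

lemma filter_range_lt {m : ℕ} (hm : m ≤ ℓ) :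
    (Finset.range ℓ).filter (fun j => j < m) = Finset.range m := by
  ext k
  simp only [mem_filter, mem_range]
  omega

lemma prod_cells {M : Type*} [CommMonoid M] (f : ℕ × ℕ → M) :
    ∏ x ∈ cells p, f x = ∏ i ∈ range ℓ, ∏ j ∈ range (rowLen p i), f (i, j) := by
  unfold cells
  rw [prod_filter, Finset.prod_product]
  refine Finset.prod_congr rfl fun i _ => ?_
  rw [← prod_filter]
  have hfil : (range ℓ).filter (fun a => (i, a).2 < rowLen p (i, a).1)
      = range (rowLen p i) := by
    ext k
    have := rowLen_le p i
    simp only [mem_filter, mem_range]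
    omega
  rw [hfil]

lemma sum_cells {M : Type*} [AddCommMonoid M] (f : ℕ × ℕ → M) :
    ∑ x ∈ cells p, f x = ∑ i ∈ range ℓ, ∑ j ∈ range (rowLen p i), f (i, j) := by
  unfold cells
  rw [sum_filter, Finset.sum_product]
  refine Finset.sum_congr rfl fun i _ => ?_
  rw [← sum_filter]
  have hfil : (range ℓ).filter (fun a => (i, a).2 < rowLen p (i, a).1)
      = range (rowLen p i) := by
    ext k
    have := rowLen_le p i
    simp only [mem_filter, mem_range]
    omega
  rw [hfil]

lemma sum_getD (L : List ℕ) : ∑ i ∈ range L.length, L.getD i 0 = L.sum := by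
  induction L with
  | nil => simp
  | cons a L ih =>
    rw [List.length_cons, Finset.sum_range_succ']
    simp only [List.getD_cons_succ, List.getD_cons_zero, List.sum_cons]
    rw [ih, Nat.add_comm]

lemma sum_rowLen : ∑ i ∈ range ℓ, rowLen p i = ℓ := by
  unfold rowLen
  have hlen : ((p.parts.sort (· ≤ ·)).reverse).length ≤ ℓ := by
    have h := parts_card_le p
    rwa [parts_eq_coe p, Multiset.coe_card] at h
  rw [← Finset.sum_subset (Finset.range_subset_range.mpr hlen)
    (fun i _ hi => List.getD_eq_default _ _ (by simpa using hi))]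
  rw [sum_getD]
  have h := p.parts_sum
  rwa [parts_eq_coe p, Multiset.sum_coe] at h

lemma card_cells : (cells p).card = ℓ := by
  rw [Finset.card_eq_sum_ones, sum_cells p]
  simp [sum_rowLen p]

lemma sum_fst : ∑ x ∈ cells p, x.1 = bStat p := by
  rw [sum_cells p]
  unfold bStat
  refine Finset.sum_congr rfl fun i _ => ?_
  simp [Finset.sum_const, mul_comm]

lemma colLen_card (j : ℕ) :
    colLen p j = ((range ℓ).filter (fun i => j < rowLen p i)).card := by
  conv_lhs => rw [← Finset.card_range (colLen p j)]
  rw [← filter_range_lt (colLen_le p j)]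
  congr 1
  apply Finset.filter_congr
  intro i _
  simpa using lt_colLen_iff p i j

lemma sum_colLen : ∑ j ∈ range ℓ, colLen p j = ℓ := by
  have : ∀ j, colLen p j = ∑ i ∈ range ℓ, if j < rowLen p i then 1 else 0 := by
    intro j; rw [colLen_card p j, Finset.card_filter]
  simp only [this]
  rw [Finset.sum_comm]
  have : ∀ i, (∑ j ∈ range ℓ, if j < rowLen p i then 1 else 0) = rowLen p i := by
    intro i
    rw [← Finset.card_filter, filter_range_lt (rowLen_le p i), Finset.card_range]
  simp only [this]
  exact sum_rowLen p

/-- The conjugate partition. -/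
def conjP (p : Nat.Partition ℓ) : Nat.Partition ℓ where
  parts := ((Finset.range ℓ).val.map (colLen p)).filter (0 < ·)
  parts_pos := fun h => (Multiset.mem_filter.mp h).2
  parts_sum := by
    have h1 := Multiset.filter_add_not (0 < ·) ((Finset.range ℓ).val.map (colLen p))
    have h2 : (Multiset.filter (fun a => ¬ 0 < a)
        ((Finset.range ℓ).val.map (colLen p))).sum = 0 := by
      apply Multiset.sum_eq_zero
      intro x hx
      have := (Multiset.mem_filter.mp hx).2
      omega
    have h3 : (((Finset.range ℓ).val.map (colLen p))).sum = ℓ := by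
      have : ∑ j ∈ range ℓ, colLen p j = ((Finset.range ℓ).val.map (colLen p)).sum := rfl
      rw [← this]
      exact sum_colLen p
    have h4 := congrArg Multiset.sum h1
    rw [Multiset.sum_add, h2, add_zero, h3] at h4
    exact h4



lemma colLen_conjP (j : ℕ) : colLen (conjP p) j = rowLen p j := by
  unfold colLen conjP
  simp only
  rw [Multiset.filter_filter]
  have hiff : ∀ a : ℕ, (j < a ∧ 0 < a) ↔ j < a :=
    fun a => ⟨And.left, fun h => ⟨h, lt_of_le_of_lt (Nat.zero_le j) h⟩⟩
  rw [Multiset.filter_congr (fun a _ => hiff a)]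
  rw [← Multiset.countP_eq_card_filter, Multiset.countP_map,
    ← Finset.filter_val, ← Finset.card_def]
  have : (Finset.range ℓ).filter (fun i => j < colLen p i)
      = (Finset.range ℓ).filter (fun i => i < rowLen p j) := by
    apply Finset.filter_congr
    intro i _
    exact lt_colLen_iff p j i
  rw [this, filter_range_lt (rowLen_le p j), Finset.card_range]


lemma rowLen_conjP (i : ℕ) : rowLen (conjP p) i = colLen p i := by
  conv_lhs => rw [← Finset.card_range (rowLen (conjP p) i),
    ← filter_range_lt (rowLen_le (conjP p) i)]
  have h : (Finset.range ℓ).filter (fun j => j < rowLen (conjP p) i)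
      = (Finset.range ℓ).filter (fun j => j < colLen p i) := by
    apply Finset.filter_congr
    intro j _
    rw [← lt_colLen_iff (conjP p) i j, colLen_conjP p j, ← lt_colLen_iff p j i]
  rw [h, filter_range_lt (colLen_le p i), Finset.card_range]

lemma partition_ext (q : Nat.Partition ℓ) (h : ∀ j, colLen p j = colLen q j) :
    p = q := by
  have key : ∀ (r : Nat.Partition ℓ) (b : ℕ),
      Multiset.count (b + 1) r.parts + colLen r (b + 1) = colLen r b := by
    intro r b
    unfold colLen
    rw [Multiset.count_eq_card_filter_eq]
    rw [← Multiset.card_add, Multiset.filter_add_filter]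
    have h1 : Multiset.filter (fun x => b + 1 = x ∨ b + 1 < x) r.parts
        = Multiset.filter (fun x => b < x) r.parts := by
      apply Multiset.filter_congr
      intro x _
      omega
    have h2 : Multiset.filter (fun x => b + 1 = x ∧ b + 1 < x) r.parts = 0 := by
      rw [Multiset.filter_eq_nil]
      intro x _
      omega
    rw [h1, h2]
    simp
  have hcount : ∀ a, Multiset.count a p.parts = Multiset.count a q.parts := by
    intro a
    cases a with
    | zero =>
      rw [Multiset.count_eq_zero_of_notMem, Multiset.count_eq_zero_of_notMem]
      · intro hm; exact absurd (q.parts_pos hm) (lt_irrefl 0)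
      · intro hm; exact absurd (p.parts_pos hm) (lt_irrefl 0)
    | succ b =>
      have k1 := key p b
      have k2 := key q b
      have e1 := h b
      have e2 := h (b + 1)
      omega
  have : p.parts = q.parts := Multiset.ext.mpr hcount
  cases p; cases q
  simpa using this

lemma conjP_conjP : conjP (conjP p) = p :=
  partition_ext _ _ (fun j => by rw [colLen_conjP, rowLen_conjP])

lemma swap_mem_cells_iff (x : ℕ × ℕ) :
    x.swap ∈ cells (conjP p) ↔ x ∈ cells p := by
  rw [mem_cells_iff, mem_cells_iff]
  simp only [Prod.snd_swap, Prod.fst_swap]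
  rw [rowLen_conjP]
  exact lt_colLen_iff p x.1 x.2

lemma prod_swap_cells {M : Type*} [CommMonoid M] (f : ℕ × ℕ → M) :
    ∏ x ∈ cells (conjP p), f x = ∏ x ∈ cells p, f x.swap := by
  refine Finset.prod_nbij' Prod.swap Prod.swap ?_ ?_ ?_ ?_ ?_
  · intro a ha
    rwa [← Prod.swap_swap a, swap_mem_cells_iff] at ha
  · intro a ha
    rwa [swap_mem_cells_iff]
  · intro a _; exact Prod.swap_swap a
  · intro a _; exact Prod.swap_swap a
  · intro a _; rfl

lemma sum_swap_cells {M : Type*} [AddCommMonoid M] (f : ℕ × ℕ → M) :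
    ∑ x ∈ cells (conjP p), f x = ∑ x ∈ cells p, f x.swap := by
  refine Finset.sum_nbij' Prod.swap Prod.swap ?_ ?_ ?_ ?_ ?_
  · intro a ha
    rwa [← Prod.swap_swap a, swap_mem_cells_iff] at ha
  · intro a ha
    rwa [swap_mem_cells_iff]
  · intro a _; exact Prod.swap_swap a
  · intro a _; exact Prod.swap_swap a
  · intro a _; rfl

lemma hookLen_swap (x : ℕ × ℕ) : hookLen (conjP p) x.swap = hookLen p x := by
  unfold hookLen
  simp only [Prod.fst_swap, Prod.snd_swap]
  rw [rowLen_conjP, colLen_conjP]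
  omega

lemma hook_pos {x : ℕ × ℕ} (hx : x ∈ cells p) : 1 ≤ hookLen p x := by
  rw [mem_cells_iff] at hx
  have h2 : x.1 < colLen p x.2 := (lt_colLen_iff p x.1 x.2).mpr hx
  unfold hookLen
  omega

lemma sum_snd : ∑ x ∈ cells p, x.2 = bStat (conjP p) := by
  have := sum_swap_cells p (f := Prod.fst)
  simp only [Prod.fst_swap] at this
  rw [← this, sum_fst]

lemma sum_hook : ∑ x ∈ cells p, hookLen p x = ℓ + bStat p + bStat (conjP p) := by
  have hsplit : ∑ x ∈ cells p, hookLen p x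
      = (∑ x ∈ cells p, (rowLen p x.1 - 1 - x.2))
        + ((∑ x ∈ cells p, (colLen p x.2 - 1 - x.1)) + (cells p).card) := by
    rw [Finset.card_eq_sum_ones, ← Finset.sum_add_distrib, ← Finset.sum_add_distrib]
    apply Finset.sum_congr rfl
    intro x hx
    have h1 : x.2 < rowLen p x.1 := (mem_cells_iff p x).mp hx
    have h2 : x.1 < colLen p x.2 := (lt_colLen_iff p x.1 x.2).mpr h1
    unfold hookLen
    omega
  have hrow : ∀ (r : Nat.Partition ℓ),
      ∑ x ∈ cells r, (rowLen r x.1 - 1 - x.2) = ∑ x ∈ cells r, x.2 := by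
    intro r
    rw [sum_cells, sum_cells]
    refine Finset.sum_congr rfl fun i _ => ?_
    exact Finset.sum_range_reflect (fun j => j) (rowLen r i)
  have hcol : ∑ x ∈ cells p, (colLen p x.2 - 1 - x.1) = bStat p := by
    have h := sum_swap_cells p (f := fun y => rowLen (conjP p) y.1 - 1 - y.2)
    simp only [Prod.fst_swap, Prod.snd_swap] at h
    have h2 : ∀ x : ℕ × ℕ, rowLen (conjP p) x.2 - 1 - x.1
        = colLen p x.2 - 1 - x.1 := fun x => by rw [rowLen_conjP]
    simp only [h2] at h
    rw [← h, hrow (conjP p), sum_snd, conjP_conjP]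
  rw [hsplit, hrow p, sum_snd, hcol, card_cells]
  omega

lemma sum_content : ∑ x ∈ cells p, content x
    = (bStat (conjP p) : ℤ) - (bStat p : ℤ) := by
  unfold content
  rw [Finset.sum_sub_distrib, ← Nat.cast_sum, ← Nat.cast_sum, sum_snd, sum_fst]



variable {K : Type*} [Field K]

lemma prod_zpow_eq (u : K) (hu : u ≠ 0) {α : Type*} (s : Finset α) (f : α → ℤ) :
    ∏ x ∈ s, u ^ f x = u ^ (∑ x ∈ s, f x) := by
  classical
  induction s using Finset.cons_induction with
  | empty => simp
  | cons a s ha ih => rw [Finset.prod_cons, Finset.sum_cons, ih, zpow_add₀ hu]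

lemma one_sub_inv {v : K} (hv : v ≠ 0) : 1 - v⁻¹ = -v⁻¹ * (1 - v) := by
  have h : v⁻¹ * v = 1 := inv_mul_cancel₀ hv
  calc 1 - v⁻¹ = -(v⁻¹ * 1 - v⁻¹ * v) := by rw [h]; ring
  _ = -v⁻¹ * (1 - v) := by ring

lemma term_eq {ℓ : ℕ} (n : ℤ) (u t : K) (hu : u ≠ 0) (ht : t ≠ 0)
    (p : Nat.Partition ℓ) :
    t ^ (∑ i ∈ range ℓ, i) *
      ((∏ j ∈ range ℓ, (1 - t⁻¹ ^ (j + 1))) *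
        ((u * t⁻¹) ^ bStat p *
          ∏ x ∈ cells p,
            (1 - u ^ (n + content x)) /
              ((1 - u ^ hookLen p x) * (1 - t⁻¹ ^ hookLen p x)))) =
    (-(u ^ n)) ^ ℓ *
      ((∏ j ∈ range ℓ, (1 - t ^ (j + 1))) *
        ((u * t) ^ bStat (conjP p) *
          ∏ x ∈ cells (conjP p),
            (1 - u ^ (-n + content x)) /
              ((1 - u ^ hookLen (conjP p) x) * (1 - t ^ hookLen (conjP p) x)))) := by
  have hb := bStat p
  set N : ℕ := ∑ i ∈ range ℓ, i with hNdef
  set b : ℕ := bStat p with hbdef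
  set b' : ℕ := bStat (conjP p) with hb'def
  set P : K := ∏ j ∈ range ℓ, (1 - t ^ (j + 1)) with hPdef
  set C : K := ∏ x ∈ cells p,
      (1 - u ^ (n + content x)) /
        ((1 - u ^ hookLen p x) * (1 - t ^ hookLen p x)) with hCdef
  -- prefactor product
  have hP : (∏ j ∈ range ℓ, (1 - t⁻¹ ^ (j + 1)))
      = (-1 : K) ^ ℓ * t ^ (-((N : ℤ) + (ℓ : ℤ))) * P := by
    have hcong : ∀ j ∈ range ℓ,
        (1 - t⁻¹ ^ (j + 1)) = (-1) * (t ^ (j + 1))⁻¹ * (1 - t ^ (j + 1)) := by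
      intro j _
      rw [inv_pow, one_sub_inv (pow_ne_zero _ ht)]
      ring
    rw [Finset.prod_congr rfl hcong, Finset.prod_mul_distrib, Finset.prod_mul_distrib,
      Finset.prod_const, Finset.card_range, Finset.prod_inv_distrib,
      Finset.prod_pow_eq_pow_sum]
    have hsum : ∑ j ∈ range ℓ, (j + 1) = N + ℓ := by
      rw [Finset.sum_add_distrib, Finset.sum_const, Finset.card_range, smul_eq_mul, mul_one]
    rw [hsum, ← zpow_natCast t (N + ℓ), ← zpow_neg]
    push_cast
    rw [hPdef]
  -- LHS cell product
  have hC : (∏ x ∈ cells p,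
        (1 - u ^ (n + content x)) /
          ((1 - u ^ hookLen p x) * (1 - t⁻¹ ^ hookLen p x)))
      = C * ((-1 : K) ^ ℓ * t ^ ((ℓ : ℤ) + (b : ℤ) + (b' : ℤ))) := by
    have hcong : ∀ x ∈ cells p,
        (1 - u ^ (n + content x)) /
          ((1 - u ^ hookLen p x) * (1 - t⁻¹ ^ hookLen p x))
        = ((1 - u ^ (n + content x)) /
            ((1 - u ^ hookLen p x) * (1 - t ^ hookLen p x)))
          * ((-1) * t ^ hookLen p x) := by
      intro x _
      rw [inv_pow, one_sub_inv (pow_ne_zero _ ht)]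
      simp only [div_eq_mul_inv, mul_inv, inv_neg, inv_inv]
      ring
    rw [Finset.prod_congr rfl hcong, Finset.prod_mul_distrib, Finset.prod_mul_distrib,
      Finset.prod_const, card_cells, Finset.prod_pow_eq_pow_sum]
    rw [← zpow_natCast t (∑ x ∈ cells p, hookLen p x)]
    congr 2
    have := sum_hook p
    push_cast [this]
    ring
  -- RHS cell product
  have hB : (∏ x ∈ cells (conjP p),
        (1 - u ^ (-n + content x)) /
          ((1 - u ^ hookLen (conjP p) x) * (1 - t ^ hookLen (conjP p) x)))
      = C * ((-1 : K) ^ ℓ * u ^ (-(n * (ℓ : ℤ)) + ((b : ℤ) - (b' : ℤ)))) := by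
    rw [prod_swap_cells]
    have hcong : ∀ x ∈ cells p,
        (1 - u ^ (-n + content x.swap)) /
          ((1 - u ^ hookLen (conjP p) x.swap) * (1 - t ^ hookLen (conjP p) x.swap))
        = ((1 - u ^ (n + content x)) /
            ((1 - u ^ hookLen p x) * (1 - t ^ hookLen p x)))
          * ((-1) * u ^ (-(n + content x))) := by
      intro x _
      rw [hookLen_swap]
      have hc : content x.swap = - content x := by
        unfold content
        simp only [Prod.fst_swap, Prod.snd_swap]
        ring
      rw [hc]
      have he : -n + -content x = -(n + content x) := by ring
      rw [he]
      have h1 : (1 : K) - u ^ (-(n + content x))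
          = (-1 * u ^ (-(n + content x))) * (1 - u ^ (n + content x)) := by
        rw [zpow_neg, one_sub_inv (zpow_ne_zero _ hu)]
        ring
      rw [h1]
      ring
    rw [Finset.prod_congr rfl hcong, Finset.prod_mul_distrib, Finset.prod_mul_distrib,
      Finset.prod_const, card_cells, prod_zpow_eq u hu]
    congr 2
    have h2 : ∑ x ∈ cells p, -(n + content x)
        = -(((cells p).card : ℤ) * n + ∑ x ∈ cells p, content x) := by
      rw [Finset.sum_neg_distrib, Finset.sum_add_distrib, Finset.sum_const, nsmul_eq_mul]
    rw [h2, card_cells, sum_content]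
    rw [hbdef, hb'def]
    ring
  -- power splittings
  have hsplit1 : (u * t⁻¹) ^ b = u ^ ((b : ℕ) : ℤ) * t ^ (-((b : ℕ) : ℤ)) := by
    rw [mul_pow, inv_pow, ← zpow_natCast u, ← zpow_natCast t, ← zpow_neg]
  have hsplit2 : (u * t) ^ b' = u ^ ((b' : ℕ) : ℤ) * t ^ (((b' : ℕ) : ℤ)) := by
    rw [mul_pow, ← zpow_natCast u, ← zpow_natCast t]
  have hneg : (-(u ^ n)) ^ ℓ = (-1 : K) ^ ℓ * u ^ (n * (ℓ : ℤ)) := by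
    rw [neg_pow]
    congr 1
    rw [← zpow_natCast (u ^ n) ℓ, ← zpow_mul]
  rw [hP, hC, hB, hsplit1, hsplit2, hneg, ← zpow_natCast t N]
  -- now pure zpow bookkeeping
  have hT : t ^ ((N : ℤ)) * t ^ (-((N : ℤ) + (ℓ : ℤ))) * t ^ (-((b : ℕ) : ℤ))
        * t ^ ((ℓ : ℤ) + (b : ℤ) + (b' : ℤ)) = t ^ ((b' : ℕ) : ℤ) := by
    rw [← zpow_add₀ ht, ← zpow_add₀ ht, ← zpow_add₀ ht]
    congr 1
    ring
  have hU : u ^ (n * (ℓ : ℤ)) * u ^ ((b' : ℕ) : ℤ)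
        * u ^ (-(n * (ℓ : ℤ)) + ((b : ℤ) - (b' : ℤ))) = u ^ ((b : ℕ) : ℤ) := by
    rw [← zpow_add₀ hu, ← zpow_add₀ hu]
    congr 1
    ring
  calc
    t ^ ((N : ℤ)) * ((-1 : K) ^ ℓ * t ^ (-((N : ℤ) + (ℓ : ℤ))) * P *
        (u ^ ((b : ℕ) : ℤ) * t ^ (-((b : ℕ) : ℤ)) *
          (C * ((-1 : K) ^ ℓ * t ^ ((ℓ : ℤ) + (b : ℤ) + (b' : ℤ))))))
      = ((-1 : K) ^ ℓ * (-1 : K) ^ ℓ) * (P * C) * u ^ ((b : ℕ) : ℤ) *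
          (t ^ ((N : ℤ)) * t ^ (-((N : ℤ) + (ℓ : ℤ))) * t ^ (-((b : ℕ) : ℤ))
            * t ^ ((ℓ : ℤ) + (b : ℤ) + (b' : ℤ))) := by ring
    _ = ((-1 : K) ^ ℓ * (-1 : K) ^ ℓ) * (P * C) * u ^ ((b : ℕ) : ℤ)
          * t ^ ((b' : ℕ) : ℤ) := by rw [hT]
    _ = ((-1 : K) ^ ℓ * (-1 : K) ^ ℓ) * (P * C) *
          (u ^ (n * (ℓ : ℤ)) * u ^ ((b' : ℕ) : ℤ)
            * u ^ (-(n * (ℓ : ℤ)) + ((b : ℤ) - (b' : ℤ)))) * t ^ ((b' : ℕ) : ℤ) := by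
        rw [hU]
    _ = (-1 : K) ^ ℓ * u ^ (n * (ℓ : ℤ)) *
        (P * (u ^ ((b' : ℕ) : ℤ) * t ^ ((b' : ℕ) : ℤ) *
          (C * ((-1 : K) ^ ℓ * u ^ (-(n * (ℓ : ℤ)) + ((b : ℤ) - (b' : ℤ))))))) := by ring


lemma conjP_involutive {ℓ : ℕ} : Function.Involutive (conjP (ℓ := ℓ)) :=
  fun p => conjP_conjP p

lemma key {ℓ : ℕ} (n : ℤ) (u t : K) (hu : u ≠ 0) (ht : t ≠ 0) :
    t ^ (ℓ * (ℓ - 1) / 2) * hookContentSum ℓ n u t⁻¹ =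
      (-(u ^ n)) ^ ℓ * hookContentSum ℓ (-n) u t := by
  rw [← Finset.sum_range_id]
  unfold hookContentSum
  simp only [Finset.mul_sum]
  exact Fintype.sum_equiv (Function.Involutive.toPerm conjP conjP_involutive) _ _
    (fun p => term_eq n u t hu ht p)

end HookAux

/-- **Proposition (reciprocity).**  In the field `ℚ(u,t)` of rational
functions in two variables (realized as the fraction field of the polynomial
ring `ℚ[u,t]`), for every integer `n`:
`t^{ℓ(ℓ-1)/2} · X_{n,ℓ}(u, t⁻¹) = (-u^n)^ℓ · X_{-n,ℓ}(u, t)`. -/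
theorem hook_content_reciprocity (ℓ : ℕ) (hℓ : 0 < ℓ) (n : ℤ) :
    letI K := FractionRing (MvPolynomial (Fin 2) ℚ)
    let u : K := algebraMap (MvPolynomial (Fin 2) ℚ) K (MvPolynomial.X 0)
    let t : K := algebraMap (MvPolynomial (Fin 2) ℚ) K (MvPolynomial.X 1)
    t ^ (ℓ * (ℓ - 1) / 2) * hookContentSum ℓ n u t⁻¹ =
      (-(u ^ n)) ^ ℓ * hookContentSum ℓ (-n) u t := by
  intro u t
  have hinj : Function.Injective (algebraMap (MvPolynomial (Fin 2) ℚ)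
      (FractionRing (MvPolynomial (Fin 2) ℚ))) :=
    IsFractionRing.injective _ _
  have hzero : ∀ i : Fin 2,
      (algebraMap (MvPolynomial (Fin 2) ℚ) (FractionRing (MvPolynomial (Fin 2) ℚ))
        (MvPolynomial.X i)) ≠ 0 := by
    intro i h
    rw [show (0 : FractionRing (MvPolynomial (Fin 2) ℚ))
        = algebraMap (MvPolynomial (Fin 2) ℚ) (FractionRing (MvPolynomial (Fin 2) ℚ)) 0
      from (map_zero _).symm] at h
    exact MvPolynomial.X_ne_zero i (hinj h)
  exact HookAux.key n u t (hzero 0) (hzero 1)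
end
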